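/- arXiv:2209.01086 — 13 statements merged into one kernel-verified Lean document; each statement's English description precedes it below -/
import Mathlib

section
/- Let A be a ring and let a, c, b ∈ A such that c is a pseudo inverse of a (i.e. c ∈ comm²(a) and c = c²a). If ba commutes with a, then bc commutes with c. -/
theorem pseudo_inverse_comm_left {A : Type*} [Ring A] (a b c : A)
    (hc2 : ∀ x : A, Commute x a → Commute x c) (hc : c = c ^ 2 * a)
    (hba : Commute (b * a) a) :
    Commute (b * c) c := by
  have hac : Commute a c := hc2 a (Commute.refl a)
  have hbac : Commute (b * a) c := hc2 _ hba
  have hkey : b * c = b * a * c ^ 2 := by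
    nth_rewrite 1 [hc]
    rw [← (hac.pow_right 2).eq, ← mul_assoc]
  show b * c * c = c * (b * c)
  rw [hkey]
  calc b * a * c ^ 2 * c = b * a * (c * c ^ 2) := by
        rw [mul_assoc]; noncomm_ring
    _ = b * a * c * c ^ 2 := by rw [← mul_assoc]
    _ = c * (b * a) * c ^ 2 := by rw [hbac.eq]
    _ = c * (b * a * c ^ 2) := by rw [mul_assoc, mul_assoc]
end

section
/- Let A be a ring and let a, c, b ∈ A such that c is a pseudo inverse of a. If ab commutes with a and additionally a ∈ comm_l(b) (i.e. ab ∈ comm(a) and ba ∈ comm(b)), then c ∈ comm_l(b), i.e. cb commutes with c and bc commutes with b. -/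
theorem pseudo_inverse_comm_l {A : Type*} [Ring A] (a b c : A)
    (hc2 : ∀ x : A, Commute x a → Commute x c) (hc : c = c ^ 2 * a)
    (hab : Commute (a * b) a) (hba : Commute (b * a) b) :
    Commute (c * b) c ∧ Commute (b * c) b := by
  rw [pow_two] at hc
  have hc' : c = c * c * a := hc
  have E1 : (a * b) * c = c * (a * b) := hc2 _ hab
  have E2 : (a * b) * a = a * (a * b) := hab
  have E3 : (b * a) * b = b * (b * a) := hba
  have E4 : a * c = c * a := hc2 a (Commute.refl a)
  have hc3 : c = c * c * c * (a * a) := by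
    calc c = c * c * a := hc'
    _ = c * (c * c * a) * a := by rw [← hc']; exact hc'
    _ = c * c * c * (a * a) := by noncomm_ring
  have goal1 : (c * b) * c = c * (c * b) := by
    calc (c * b) * c
        = (c * (c * a)) * b * c := by rw [mul_assoc] at hc'; rw [← hc']
      _ = c * c * ((a * b) * c) := by noncomm_ring
      _ = c * c * (c * (a * b)) := by rw [E1]
      _ = c * (c * c * a) * b := by noncomm_ring
      _ = c * (c * b) := by rw [← hc']; noncomm_ring
  have goal2 : (b * c) * b = b * (b * c) := by
    calc (b * c) * b
        = b * (c * c * c * (a * a)) * b := by rw [← hc3]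
      _ = b * (c * c * c) * (a * (a * b)) := by noncomm_ring
      _ = b * (c * c * c) * ((a * b) * a) := by rw [← E2]
      _ = b * (c * c) * (c * (a * b)) * a := by noncomm_ring
      _ = b * (c * c) * ((a * b) * c) * a := by rw [← E1]
      _ = b * c * (c * (a * b)) * (c * a) := by noncomm_ring
      _ = b * c * ((a * b) * c) * (c * a) := by rw [← E1]
      _ = b * (c * (a * b)) * (c * (c * a)) := by noncomm_ring
      _ = b * ((a * b) * c) * (c * (c * a)) := by rw [← E1]
      _ = ((b * a) * b) * (c * (c * (c * a))) := by noncomm_ring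
      _ = (b * (b * a)) * (c * (c * (c * a))) := by rw [E3]
      _ = b * b * ((a * c) * (c * (c * a))) := by noncomm_ring
      _ = b * b * ((c * a) * (c * (c * a))) := by rw [E4]
      _ = b * b * (c * ((a * c) * (c * a))) := by noncomm_ring
      _ = b * b * (c * ((c * a) * (c * a))) := by rw [E4]
      _ = b * b * (c * (c * ((a * c) * a))) := by noncomm_ring
      _ = b * b * (c * (c * ((c * a) * a))) := by rw [E4]
      _ = b * b * (c * c * c * (a * a)) := by noncomm_ring
      _ = b * (b * c) := by rw [← hc3]; noncomm_ring
  exact ⟨goal1, goal2⟩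
end

section
/- Let A be a ring and let a, c, b ∈ A such that c is a pseudo inverse of a. If ba commutes with a and additionally a ∈ comm_r(b) (i.e. ab ∈ comm(b) and ba ∈ comm(a)), then c ∈ comm_r(b), i.e. cb ∈ comm(b) and bc ∈ comm(c). -/
theorem pseudo_inverse_comm_r {A : Type*} [Ring A] (a b c : A)
    (hc2 : ∀ x : A, Commute x a → Commute x c) (hc : c = c ^ 2 * a)
    (hab : Commute (a * b) b) (hba : Commute (b * a) a) :
    Commute (c * b) b ∧ Commute (b * c) c := by
  have h3 : a * c = c * a := hc2 a (Commute.refl a)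
  have h4 : b * (a * c) = c * (b * a) := by
    simpa [mul_assoc] using (hc2 _ hba).eq
  have h4' : ∀ y : A, b * (a * (c * y)) = c * (b * (a * y)) := by
    intro y
    have := congrArg (· * y) h4
    simpa [mul_assoc] using this
  have habr : a * (b * b) = b * (a * b) := by
    simpa [mul_assoc] using hab.eq
  have hc'' : c = a * (c * c) := by
    calc c = c ^ 2 * a := hc
    _ = c * (c * a) := by rw [sq, mul_assoc]
    _ = c * (a * c) := by rw [h3]
    _ = (c * a) * c := by rw [mul_assoc]
    _ = (a * c) * c := by rw [h3]
    _ = a * (c * c) := by rw [mul_assoc]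
  constructor
  · show c * b * b = b * (c * b)
    have lhs : c * b * b = c * (c * (b * (a * b))) := by
      calc c * b * b = c * (b * b) := by rw [mul_assoc]
      _ = c ^ 2 * a * (b * b) := by nth_rewrite 1 [hc]; rfl
      _ = c * (c * (a * (b * b))) := by rw [sq]; simp [mul_assoc]
      _ = c * (c * (b * (a * b))) := by rw [habr]
    have rhs : b * (c * b) = c * (c * (b * (a * b))) := by
      calc b * (c * b) = b * ((a * (c * c)) * b) := by nth_rewrite 1 [hc'']; rfl
      _ = b * (a * (c * (c * b))) := by simp [mul_assoc]
      _ = c * (b * (a * (c * b))) := h4' _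
      _ = c * (c * (b * (a * b))) := by rw [h4' b]
    rw [lhs, rhs]
  · show b * c * c = c * (b * c)
    have lhs : b * c * c = c * (c * (c * (b * a))) := by
      calc b * c * c = b * (c * c) := by rw [mul_assoc]
      _ = b * ((a * (c * c)) * c) := by nth_rewrite 1 [hc'']; rfl
      _ = b * (a * (c * (c * c))) := by simp [mul_assoc]
      _ = c * (b * (a * (c * c))) := h4' _
      _ = c * (b * (a * (c * c))) := rfl
      _ = c * (c * (b * (a * c))) := by rw [h4' c]
      _ = c * (c * (c * (b * a))) := by rw [h4]
    have rhs : c * (b * c) = c * (c * (c * (b * a))) := by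
      calc c * (b * c) = c * (b * (a * (c * c))) := by nth_rewrite 2 [hc'']; rfl
      _ = c * (c * (b * (a * c))) := by rw [h4' c]
      _ = c * (c * (c * (b * a))) := by rw [h4]
    rw [lhs, rhs]
end

section
/- Let A be a ring and let a, b ∈ A be pseudo invertible with pseudo inverses c and d respectively. If a ∈ comm_r(b) (i.e. ab ∈ comm(b) and ba ∈ comm(a)), then cb, ad, and cd all commute with b. -/
theorem pseudo_inverses_comm_with_b {A : Type*} [Ring A] (a b c d : A)
    (hc2 : ∀ x : A, Commute x a → Commute x c) (hc : c = c ^ 2 * a)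
    (hd2 : ∀ x : A, Commute x b → Commute x d) (hd : d = d ^ 2 * b)
    (hab : Commute (a * b) b) (hba : Commute (b * a) a) :
    Commute (c * b) b ∧ Commute (a * d) b ∧ Commute (c * d) b := by
  have hca : a * c = c * a := (hc2 a (Commute.refl a)).eq
  have hdb : b * d = d * b := (hd2 b (Commute.refl b)).eq
  have h5 : (b * a) * c = c * (b * a) := (hc2 (b * a) hba).eq
  have h6 : (a * b) * d = d * (a * b) := (hd2 (a * b) hab).eq
  have habe : (a * b) * b = b * (a * b) := hab.eq
  have hac2 : a * (c * c) = c := by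
    rw [← mul_assoc, hca, mul_assoc, hca, ← mul_assoc, ← pow_two, ← hc]
  have hbd2 : b * (d * d) = d := by
    rw [← mul_assoc, hdb, mul_assoc, hdb, ← mul_assoc, ← pow_two, ← hd]
  have g1 : (c * b) * b = b * (c * b) := by
    calc (c * b) * b = (c ^ 2 * a) * b * b := by rw [← hc]
    _ = (c * c) * ((a * b) * b) := by rw [pow_two]; simp only [mul_assoc]
    _ = (c * c) * (b * (a * b)) := by rw [habe]
    _ = c * ((c * (b * a)) * b) := by simp only [mul_assoc]
    _ = c * (((b * a) * c) * b) := by rw [← h5]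
    _ = (c * (b * a)) * (c * b) := by simp only [mul_assoc]
    _ = ((b * a) * c) * (c * b) := by rw [← h5]
    _ = b * ((a * (c * c)) * b) := by simp only [mul_assoc]
    _ = b * (c * b) := by rw [hac2]
  have hdbd : d = d * (b * d) := by
    conv_lhs => rw [hd]
    rw [pow_two, mul_assoc, ← hdb]
  have e1 : (a * d) * b = d * (a * b) := by
    rw [mul_assoc, ← hdb, ← mul_assoc, h6]
  have g2' : b * (a * d) = d * (a * b) := by
    calc b * (a * d) = b * (a * (d * (b * d))) := by conv_lhs => rw [hdbd]
    _ = b * (((a * d) * b) * d) := by simp only [mul_assoc]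
    _ = b * ((d * (a * b)) * d) := by rw [e1]
    _ = b * (d * (d * (a * b))) := by rw [mul_assoc, h6]
    _ = (b * (d * d)) * (a * b) := by simp only [mul_assoc]
    _ = d * (a * b) := by rw [hbd2]
  have g2 : (a * d) * b = b * (a * d) := e1.trans g2'.symm
  have g3 : (c * d) * b = b * (c * d) := by
    calc (c * d) * b = (c * b) * d := by rw [mul_assoc, ← hdb, ← mul_assoc]
    _ = (c * b) * (b * (d * d)) := by rw [hbd2]
    _ = ((c * b) * b) * (d * d) := by simp only [mul_assoc]
    _ = (b * (c * b)) * (d * d) := by rw [g1]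
    _ = b * (c * (b * (d * d))) := by simp only [mul_assoc]
    _ = b * (c * d) := by rw [hbd2]
  exact ⟨g1, g2, g3⟩
end

section
/- Let A be a ring and let a, b ∈ A be Drazin invertible elements with Drazin inverses a^D and b^D. If a ∈ comm_l(b) (i.e. ab ∈ comm(a) and ba ∈ comm(b)), then ab is Drazin invertible with Drazin inverse (ab)^D = a^D b^D. -/
/-- `c` is a Drazin inverse of `a`. -/
def IsDrazinInverse {A : Type*} [Ring A] (a c : A) : Prop :=
  Commute c a ∧ c = c ^ 2 * a ∧ ∃ n : ℕ, a ^ (n + 1) * c = a ^ n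

namespace DrazinAux

variable {A : Type*} [Ring A]

/-- `a * p ^ 2 = p`. -/
lemma ap2 {a p : A} (hpa : Commute p a) (hp2 : p = p ^ 2 * a) : a * p ^ 2 = p := by
  rw [← (hpa.pow_left 2).eq, ← hp2]

/-- `p ^ (k+2) * a = p ^ (k+1)`. -/
lemma pow_succ_a {a p : A} (hpa : Commute p a) (hp2 : p = p ^ 2 * a) (k : ℕ) :
    p ^ (k + 2) * a = p ^ (k + 1) := by
  have h : p ^ (k + 2) * a = p ^ k * (p ^ 2 * a) := by
    rw [← mul_assoc, ← pow_add]
  rw [h, ← hp2, ← pow_succ]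

/-- `a * p ^ (k+2) = p ^ (k+1)`. -/
lemma a_pow_succ {a p : A} (hpa : Commute p a) (hp2 : p = p ^ 2 * a) (k : ℕ) :
    a * p ^ (k + 2) = p ^ (k + 1) := by
  have h : p ^ (k + 2) = p ^ 2 * p ^ k := by
    rw [← pow_add]; congr 1; omega
  rw [h, ← mul_assoc, ap2 hpa hp2, ← pow_succ']

/-- `p ^ (k+1) * a ^ k = p`. -/
lemma pow_a {a p : A} (hpa : Commute p a) (hp2 : p = p ^ 2 * a) :
    ∀ k : ℕ, p ^ (k + 1) * a ^ k = p
  | 0 => by simp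
  | k + 1 => by
    have h1 : p ^ (k + 2) * a ^ (k + 1) = (p ^ (k + 2) * a) * a ^ k := by
      rw [mul_assoc, ← pow_succ']
    rw [h1, pow_succ_a hpa hp2, pow_a hpa hp2 k]

/-- `a ^ k * p ^ (k+1) = p`. -/
lemma a_pow_p' {a p : A} (hpa : Commute p a) (hp2 : p = p ^ 2 * a) (k : ℕ) :
    a ^ k * p ^ (k + 1) = p := by
  rw [← (hpa.pow_pow (k + 1) k).eq]
  exact pow_a hpa hp2 k

lemma ind_up {a p : A} {n : ℕ} (hind : a ^ (n + 1) * p = a ^ n) :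
    ∀ j, a ^ (n + j + 1) * p = a ^ (n + j)
  | 0 => hind
  | j + 1 => by
    have e1 : n + (j + 1) + 1 = (n + j + 1) + 1 := by omega
    have e2 : n + (j + 1) = (n + j) + 1 := by omega
    rw [e1, e2, pow_succ' a (n + j + 1), mul_assoc, ind_up hind j, ← pow_succ']

lemma a_pow_p {a p : A} {n : ℕ} (hind : a ^ (n + 1) * p = a ^ n) :
    ∀ j k, a ^ (n + j + k) * p ^ k = a ^ (n + j)
  | j, 0 => by simp
  | j, k + 1 => by
    have e1 : n + j + (k + 1) = n + (j + k) + 1 := by omega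
    have e2 : n + (j + k) = n + j + k := by omega
    rw [e1, pow_succ' p k, ← mul_assoc, ind_up hind (j + k), e2, a_pow_p hind j k]

/-- idempotence of `a * p`. -/
lemma e_idem {a p : A} (hpa : Commute p a) (hp2 : p = p ^ 2 * a) :
    (a * p) * (a * p) = a * p := by
  calc (a * p) * (a * p) = a * ((p * a) * p) := by rw [mul_assoc, ← mul_assoc p a p]
    _ = a * ((a * p) * p) := by rw [hpa.eq]
    _ = a * (a * p ^ 2) := by rw [mul_assoc, ← pow_two]
    _ = a * p := by rw [ap2 hpa hp2]

lemma e_pow {a p : A} (hpa : Commute p a) (hp2 : p = p ^ 2 * a) :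
    ∀ k : ℕ, (a * p) ^ (k + 1) = a * p
  | 0 => by simp
  | k + 1 => by rw [pow_succ, e_pow hpa hp2 k, e_idem hpa hp2]

lemma pe {a p : A} (hpa : Commute p a) (hp2 : p = p ^ 2 * a) : p * (a * p) = p := by
  rw [← mul_assoc, hpa.eq, mul_assoc, ← pow_two, ap2 hpa hp2]

lemma p_pow_e {a p : A} (hpa : Commute p a) (hp2 : p = p ^ 2 * a) (k : ℕ) :
    p ^ (k + 1) * (a * p) = p ^ (k + 1) := by
  rw [pow_succ, mul_assoc, pe hpa hp2]

lemma pa_idem {a p : A} (hpa : Commute p a) (hp2 : p = p ^ 2 * a) :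
    (p * a) * (p * a) = p * a := by
  calc (p * a) * (p * a) = (p * (a * p)) * a := by
        rw [mul_assoc, ← mul_assoc a p a, ← mul_assoc]
    _ = p * a := by rw [pe hpa hp2]

lemma pa_pow {a p : A} (hpa : Commute p a) (hp2 : p = p ^ 2 * a) :
    ∀ k : ℕ, (p * a) ^ (k + 1) = p * a
  | 0 => by simp
  | k + 1 => by rw [pow_succ, pa_pow hpa hp2 k, pa_idem hpa hp2]

/-- `p ^ (k+1) * a ^ (k+2) = p * a ^ 2`. -/
lemma p_pow_a2 {a p : A} (hpa : Commute p a) (hp2 : p = p ^ 2 * a) (k : ℕ) :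
    p ^ (k + 1) * a ^ (k + 2) = p * a ^ 2 := by
  calc p ^ (k + 1) * a ^ (k + 2) = (p ^ (k + 1) * a ^ (k + 1)) * a := by
        rw [pow_succ a (k + 1), ← mul_assoc]
    _ = (p * a) ^ (k + 1) * a := by rw [← hpa.mul_pow]
    _ = (p * a) * a := by rw [pa_pow hpa hp2 k]
    _ = p * a ^ 2 := by rw [mul_assoc, ← pow_two]

/-- Double commutant: anything commuting with `a` commutes with its Drazin inverse. -/
lemma dc {a p x : A} (hpa : Commute p a) (hp2 : p = p ^ 2 * a) {n : ℕ}
    (hind : a ^ (n + 1) * p = a ^ n) (hx : Commute x a) : Commute x p := by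
  have hap2 : a * p ^ 2 = p := ap2 hpa hp2
  have hind1 : a ^ (n + 2) * p = a ^ (n + 1) := ind_up hind 1
  have hmp : a ^ (n + 1) * p ^ (n + 1) = a * p :=
    ((hpa.symm.mul_pow (n + 1)).symm).trans (e_pow hpa hp2 n)
  have hmp' : p ^ (n + 1) * a ^ (n + 1) = a * p := by
    rw [(hpa.pow_pow (n + 1) (n + 1)).eq]; exact hmp
  have hea : (a * p) * a ^ (n + 1) = a ^ (n + 1) := by
    calc (a * p) * a ^ (n + 1) = a * (a ^ (n + 1) * p) := by
          rw [mul_assoc, (hpa.pow_right (n + 1)).eq]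
      _ = a * a ^ n := by rw [hind]
      _ = a ^ (n + 1) := by rw [← pow_succ']
  have hae : a ^ (n + 1) * (a * p) = a ^ (n + 1) := by
    rw [← mul_assoc, ← pow_succ]
    exact hind1
  have hxe : x * (a * p) = a ^ (n + 1) * (x * p ^ (n + 1)) := by
    calc x * (a * p) = x * (a ^ (n + 1) * p ^ (n + 1)) := by rw [hmp]
      _ = (x * a ^ (n + 1)) * p ^ (n + 1) := by rw [mul_assoc]
      _ = (a ^ (n + 1) * x) * p ^ (n + 1) := by rw [(hx.pow_right (n + 1)).eq]
      _ = a ^ (n + 1) * (x * p ^ (n + 1)) := by rw [mul_assoc]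
  have hex : (a * p) * x = (p ^ (n + 1) * x) * a ^ (n + 1) := by
    calc (a * p) * x = (p ^ (n + 1) * a ^ (n + 1)) * x := by rw [hmp']
      _ = p ^ (n + 1) * (x * a ^ (n + 1)) := by rw [mul_assoc, ← (hx.pow_right (n + 1)).eq]
      _ = (p ^ (n + 1) * x) * a ^ (n + 1) := by rw [mul_assoc]
  have h1 : (a * p) * (x * (a * p)) = x * (a * p) := by
    rw [hxe, ← mul_assoc, hea]
  have h2 : ((a * p) * x) * (a * p) = (a * p) * x := by
    rw [hex, mul_assoc, hae]
  have hcomm_e : x * (a * p) = (a * p) * x := by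
    rw [← h1, ← mul_assoc, h2]
  have hpe' : p * (a * p) = p := pe hpa hp2
  have hep : (a * p) * p = p := by rw [mul_assoc, ← pow_two, hap2]
  have key : p * x = x * p := by
    calc p * x = (p * (a * p)) * x := by rw [hpe']
      _ = p * ((a * p) * x) := by rw [mul_assoc]
      _ = p * (x * (a * p)) := by rw [hcomm_e]
      _ = p * ((x * a) * p) := by rw [← mul_assoc x a p]
      _ = p * ((a * x) * p) := by rw [hx.eq]
      _ = ((p * a) * x) * p := by rw [← mul_assoc, ← mul_assoc]
      _ = ((a * p) * x) * p := by rw [hpa.eq]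
      _ = (x * (a * p)) * p := by rw [hcomm_e]
      _ = x * ((a * p) * p) := by rw [mul_assoc]
      _ = x * p := by rw [hep]
  exact key.symm

lemma L1 {a b p : A} (hp2 : p = p ^ 2 * a) (h1 : Commute (a * b) a)
    (hpab : Commute p (a * b)) : p * (b * a) = (a * b) * p := by
  calc p * (b * a) = (p ^ 2 * a) * (b * a) := by rw [← hp2]
    _ = p ^ 2 * ((a * b) * a) := by rw [mul_assoc, ← mul_assoc a b a]
    _ = p ^ 2 * (a * (a * b)) := by rw [h1.eq]
    _ = (p ^ 2 * a) * (a * b) := by rw [← mul_assoc]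
    _ = p * (a * b) := by rw [← hp2]
    _ = (a * b) * p := hpab.eq

lemma pbk {a b p : A} (hp2 : p = p ^ 2 * a) (hpab : Commute p (a * b)) :
    ∀ k : ℕ, p * b ^ k = (a * b) ^ k * p ^ (k + 1)
  | 0 => by simp
  | k + 1 => by
    have hpb : p * b = (a * b) * p ^ 2 := by
      calc p * b = (p ^ 2 * a) * b := by rw [← hp2]
        _ = p ^ 2 * (a * b) := by rw [mul_assoc]
        _ = (a * b) * p ^ 2 := (hpab.pow_left 2).eq
    calc p * b ^ (k + 1) = (p * b ^ k) * b := by rw [pow_succ, ← mul_assoc]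
      _ = ((a * b) ^ k * p ^ (k + 1)) * b := by rw [pbk hp2 hpab k]
      _ = (a * b) ^ k * (p ^ k * (p * b)) := by
          rw [mul_assoc, pow_succ p k, mul_assoc]
      _ = (a * b) ^ k * ((p ^ k * (a * b)) * p ^ 2) := by
          rw [hpb, ← mul_assoc (p ^ k) (a * b) (p ^ 2)]
      _ = (a * b) ^ k * (((a * b) * p ^ k) * p ^ 2) := by rw [(hpab.pow_left k).eq]
      _ = ((a * b) ^ k * (a * b)) * (p ^ k * p ^ 2) := by
          simp only [mul_assoc]
      _ = (a * b) ^ (k + 1) * p ^ (k + 2) := by rw [← pow_succ, ← pow_add]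

lemma p_ba_k {a b p : A} (hL1 : p * (b * a) = (a * b) * p) (hpab : Commute p (a * b)) :
    ∀ k : ℕ, p * (b * a) ^ k = (a * b) ^ k * p
  | 0 => by simp
  | k + 1 => by
    calc p * (b * a) ^ (k + 1) = (p * (b * a)) * (b * a) ^ k := by
          rw [pow_succ' (b * a) k, ← mul_assoc]
      _ = (a * b) * (p * (b * a) ^ k) := by rw [hL1, mul_assoc]
      _ = (a * b) * ((a * b) ^ k * p) := by rw [p_ba_k hL1 hpab k]
      _ = (a * b) ^ (k + 1) * p := by rw [← mul_assoc, ← pow_succ']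

lemma p_pow_ba {a b p : A} (hL1 : p * (b * a) = (a * b) * p) (hpab : Commute p (a * b)) :
    ∀ j k : ℕ, p ^ (j + 1) * (b * a) ^ k = (a * b) ^ k * p ^ (j + 1)
  | 0, k => by simpa using p_ba_k hL1 hpab k
  | j + 1, k => by
    calc p ^ (j + 2) * (b * a) ^ k = p * (p ^ (j + 1) * (b * a) ^ k) := by
          rw [pow_succ' p (j + 1), mul_assoc]
      _ = p * ((a * b) ^ k * p ^ (j + 1)) := by rw [p_pow_ba hL1 hpab j k]
      _ = ((a * b) ^ k * p) * p ^ (j + 1) := by rw [← mul_assoc, (hpab.pow_right k).eq]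
      _ = (a * b) ^ k * p ^ (j + 2) := by rw [mul_assoc, ← pow_succ']

lemma abk {a b : A} (h1 : Commute (a * b) a) : ∀ k : ℕ, (a * b) ^ k = a ^ k * b ^ k
  | 0 => by simp
  | k + 1 => by
    calc (a * b) ^ (k + 1) = (a * b) * (a ^ k * b ^ k) := by
          rw [pow_succ' (a * b) k, abk h1 k]
      _ = ((a * b) * a ^ k) * b ^ k := by rw [← mul_assoc]
      _ = (a ^ k * (a * b)) * b ^ k := by rw [(h1.pow_right k).eq]
      _ = a ^ k * (a * (b * b ^ k)) := by simp only [mul_assoc]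
      _ = a ^ k * (a * b ^ (k + 1)) := by rw [← pow_succ']
      _ = (a ^ k * a) * b ^ (k + 1) := by rw [← mul_assoc]
      _ = a ^ (k + 1) * b ^ (k + 1) := by rw [← pow_succ]

lemma a_ba_k {a b : A} : ∀ k : ℕ, a * (b * a) ^ k = (a * b) ^ k * a
  | 0 => by simp
  | k + 1 => by
    calc a * (b * a) ^ (k + 1) = (a * (b * a) ^ k) * (b * a) := by
          rw [pow_succ, ← mul_assoc]
      _ = ((a * b) ^ k * a) * (b * a) := by rw [a_ba_k k]
      _ = (a * b) ^ k * ((a * b) * a) := by rw [mul_assoc, ← mul_assoc a b a]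
      _ = (a * b) ^ (k + 1) * a := by rw [← mul_assoc, ← pow_succ]

lemma ab_ba {a b : A} (h2 : Commute (b * a) b) (j k : ℕ) :
    (a * b) ^ (j + 1) * (b * a) ^ k = (a * b) ^ (j + 1 + k) := by
  have hb : b * (b * a) ^ k = (b * a) ^ k * b := (h2.symm.pow_right k).eq
  have harith : j + 1 + k = (j + k) + 1 := by omega
  calc (a * b) ^ (j + 1) * (b * a) ^ k
      = ((a * b) ^ j * (a * b)) * (b * a) ^ k := by rw [pow_succ]
    _ = (a * b) ^ j * (a * ((b * a) ^ k * b)) := by rw [mul_assoc, mul_assoc, hb]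
    _ = (a * b) ^ j * (((a * b) ^ k * a) * b) := by rw [← mul_assoc a, a_ba_k]
    _ = ((a * b) ^ j * (a * b) ^ k) * (a * b) := by simp only [mul_assoc]
    _ = (a * b) ^ (j + k) * (a * b) := by rw [← pow_add]
    _ = (a * b) ^ (j + 1 + k) := by rw [← pow_succ, harith]

end DrazinAux

open DrazinAux

theorem drazin_inverse_mul_comm_l {A : Type*} [Ring A] (a b ad bd : A)
    (ha : IsDrazinInverse a ad) (hb : IsDrazinInverse b bd)
    (hab : Commute (a * b) a) (hba : Commute (b * a) b) :
    IsDrazinInverse (a * b) (ad * bd) := by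
  obtain ⟨hpa, hp2, n₁, hind₁⟩ := ha
  obtain ⟨hqb, hq2, n₂, hind₂⟩ := hb
  obtain ⟨n, hinda, hindb⟩ : ∃ n : ℕ, a ^ (n + 1) * ad = a ^ n ∧ b ^ (n + 1) * bd = b ^ n :=
    ⟨n₁ + n₂, ind_up hind₁ n₂, by
      have h := ind_up hind₂ n₁; rwa [Nat.add_comm n₂ n₁] at h⟩
  -- basic derived facts
  have hpab : Commute ad (a * b) := (dc hpa hp2 hinda hab).symm
  have hqba : Commute bd (b * a) := (dc hqb hq2 hindb hba).symm
  have hL1 : ad * (b * a) = (a * b) * ad := L1 hp2 hab hpab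
  have hL2 : bd * (a * b) = (b * a) * bd := L1 hq2 hba hqba
  have hpbk : ∀ k, ad * b ^ k = (a * b) ^ k * ad ^ (k + 1) := pbk hp2 hpab
  have hqak : ∀ k, bd * a ^ k = (b * a) ^ k * bd ^ (k + 1) := pbk hq2 hqba
  have hp_pow_ba : ∀ j k, ad ^ (j + 1) * (b * a) ^ k = (a * b) ^ k * ad ^ (j + 1) :=
    p_pow_ba hL1 hpab
  have hq_pow_ab : ∀ j k, bd ^ (j + 1) * (a * b) ^ k = (b * a) ^ k * bd ^ (j + 1) :=
    p_pow_ba hL2 hqba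
  have habk : ∀ k, (a * b) ^ k = a ^ k * b ^ k := abk hab
  have hbak : ∀ k, (b * a) ^ k = b ^ k * a ^ k := abk hba
  have hpow_a : ∀ k, ad ^ (k + 1) * a ^ k = ad := pow_a hpa hp2
  have hbq_pow : ∀ k, b ^ k * bd ^ (k + 1) = bd := a_pow_p' hqb hq2
  -- P1
  have P1 : ∀ K : ℕ, ad ^ (K + 1) * ((a * b) ^ K * bd ^ (K + 1)) = ad * bd := by
    intro K
    calc ad ^ (K + 1) * ((a * b) ^ K * bd ^ (K + 1))
        = ad ^ (K + 1) * ((a ^ K * b ^ K) * bd ^ (K + 1)) := by rw [habk K]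
      _ = (ad ^ (K + 1) * a ^ K) * (b ^ K * bd ^ (K + 1)) := by simp only [mul_assoc]
      _ = ad * bd := by rw [hpow_a K, hbq_pow K]
  -- condition (i)
  have hcomm : (ad * bd) * (a * b) = (a * b) * (ad * bd) := by
    calc (ad * bd) * (a * b) = ad * (bd * (a * b)) := by rw [mul_assoc]
      _ = ad * ((b * a) * bd) := by rw [hL2]
      _ = (ad * (b * a)) * bd := by rw [← mul_assoc]
      _ = ((a * b) * ad) * bd := by rw [hL1]
      _ = (a * b) * (ad * bd) := by rw [mul_assoc]
  -- C' : (ab)^K (pq) = (pq)(ba)^K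
  have habpq : (a * b) * (ad * bd) = (ad * bd) * (b * a) := by
    calc (a * b) * (ad * bd) = ((a * b) * ad) * bd := by rw [← mul_assoc]
      _ = (ad * (b * a)) * bd := by rw [← hL1]
      _ = ad * ((b * a) * bd) := by rw [mul_assoc]
      _ = ad * (bd * (b * a)) := by rw [← hqba.eq]
      _ = (ad * bd) * (b * a) := by rw [← mul_assoc]
  have C' : ∀ K : ℕ, (a * b) ^ K * (ad * bd) = (ad * bd) * (b * a) ^ K := by
    intro K; induction K with
    | zero => simp
    | succ K ih =>
      calc (a * b) ^ (K + 1) * (ad * bd)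
          = (a * b) ^ K * ((a * b) * (ad * bd)) := by rw [pow_succ, mul_assoc]
        _ = (a * b) ^ K * ((ad * bd) * (b * a)) := by rw [habpq]
        _ = ((a * b) ^ K * (ad * bd)) * (b * a) := by rw [← mul_assoc]
        _ = ((ad * bd) * (b * a) ^ K) * (b * a) := by rw [ih]
        _ = (ad * bd) * (b * a) ^ (K + 1) := by rw [mul_assoc, ← pow_succ]
  -- condition (iii)
  have hindaN : a ^ (n + 4) * ad = a ^ (n + 3) := ind_up hinda 3
  have hindbN : b ^ (n + 4) * bd = b ^ (n + 3) := ind_up hindb 3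
  have hqbN : bd * b ^ (n + 4) = b ^ (n + 3) := by
    rw [(hqb.pow_right (n + 4)).eq]; exact hindbN
  have hepow : ∀ k, (a * ad) ^ (k + 1) = a * ad := e_pow hpa hp2
  have hpaN : ad ^ (n + 4) * a ^ (n + 4) = a * ad := by
    rw [← hpa.mul_pow, hpa.eq]; exact hepow (n + 3)
  have hpbkN : ad * b ^ (n + 3) = (a * b) ^ (n + 3) * ad ^ (n + 4) := hpbk (n + 3)
  have kid : (a * b) ^ (n + 3) = a ^ (n + 4) * ((a * b) ^ (n + 3) * ad ^ (n + 4)) := by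
    calc (a * b) ^ (n + 3) = a ^ (n + 3) * b ^ (n + 3) := habk (n + 3)
      _ = (a ^ (n + 4) * ad) * b ^ (n + 3) := by rw [hindaN]
      _ = a ^ (n + 4) * (ad * b ^ (n + 3)) := by rw [mul_assoc]
      _ = a ^ (n + 4) * ((a * b) ^ (n + 3) * ad ^ (n + 4)) := by rw [hpbkN]
  have hppe4 : ad ^ (n + 4) * (a * ad) = ad ^ (n + 4) := p_pow_e hpa hp2 (n + 3)
  have habNe : (a * b) ^ (n + 3) * (a * ad) = (a * b) ^ (n + 3) := by
    calc (a * b) ^ (n + 3) * (a * ad)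
        = (a ^ (n + 4) * ((a * b) ^ (n + 3) * ad ^ (n + 4))) * (a * ad) := by rw [← kid]
      _ = a ^ (n + 4) * ((a * b) ^ (n + 3) * (ad ^ (n + 4) * (a * ad))) := by
          simp only [mul_assoc]
      _ = a ^ (n + 4) * ((a * b) ^ (n + 3) * ad ^ (n + 4)) := by rw [hppe4]
      _ = (a * b) ^ (n + 3) := kid.symm
  have h3 : (a * b) ^ (n + 4) * (ad * bd) = (a * b) ^ (n + 3) := by
    calc (a * b) ^ (n + 4) * (ad * bd) = (ad * bd) * (b * a) ^ (n + 4) := C' (n + 4)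
      _ = (ad * bd) * (b ^ (n + 4) * a ^ (n + 4)) := by rw [hbak (n + 4)]
      _ = ad * ((bd * b ^ (n + 4)) * a ^ (n + 4)) := by simp only [mul_assoc]
      _ = ad * (b ^ (n + 3) * a ^ (n + 4)) := by rw [hqbN]
      _ = (ad * b ^ (n + 3)) * a ^ (n + 4) := by rw [← mul_assoc]
      _ = ((a * b) ^ (n + 3) * ad ^ (n + 4)) * a ^ (n + 4) := by rw [hpbkN]
      _ = (a * b) ^ (n + 3) * (ad ^ (n + 4) * a ^ (n + 4)) := by rw [mul_assoc]
      _ = (a * b) ^ (n + 3) * (a * ad) := by rw [hpaN]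
      _ = (a * b) ^ (n + 3) := habNe
  -- condition (ii)
  have hK1 : ad ^ 2 * ((a * b) * bd ^ 2) = ad * bd := by
    have h := P1 1
    simpa using h
  have h_abp2 : (a * b) * ad ^ 2 = ad ^ 2 * (a * b) := ((hpab.pow_left 2).eq).symm
  have h_ab_pq : (a * b) * (ad * bd) = (a * b) ^ 2 * (ad ^ 2 * bd ^ 2) := by
    calc (a * b) * (ad * bd) = (a * b) * (ad ^ 2 * ((a * b) * bd ^ 2)) := by rw [hK1]
      _ = ((a * b) * ad ^ 2) * ((a * b) * bd ^ 2) := by simp only [mul_assoc]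
      _ = (ad ^ 2 * (a * b)) * ((a * b) * bd ^ 2) := by rw [h_abp2]
      _ = ad ^ 2 * (((a * b) * (a * b)) * bd ^ 2) := by simp only [mul_assoc]
      _ = ad ^ 2 * ((a * b) ^ 2 * bd ^ 2) := by rw [← pow_two]
      _ = (ad ^ 2 * (a * b) ^ 2) * bd ^ 2 := by rw [← mul_assoc]
      _ = ((a * b) ^ 2 * ad ^ 2) * bd ^ 2 := by rw [(hpab.pow_pow 2 2).eq]
      _ = (a * b) ^ 2 * (ad ^ 2 * bd ^ 2) := by rw [mul_assoc]
  -- instantiated rewrite facts for the big chain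
  have h_qab2 : bd ^ (n + 4) * (a * b) ^ 2 = (b * a) ^ 2 * bd ^ (n + 4) :=
    hq_pow_ab (n + 3) 2
  have h_abba : (a * b) ^ (n + 3) * (b * a) ^ 2 = (a * b) ^ (n + 5) := ab_ba hba (n + 2) 2
  have h_split : (a * b) ^ (n + 5) = (a * (b * a) ^ (n + 4)) * b := by
    calc (a * b) ^ (n + 5) = (a * b) ^ (n + 4) * (a * b) := by rw [← pow_succ]
      _ = ((a * b) ^ (n + 4) * a) * b := by rw [← mul_assoc]
      _ = (a * (b * a) ^ (n + 4)) * b := by rw [← a_ba_k (n + 4)]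
  have h_bq : b * bd ^ (n + 4) = bd ^ (n + 3) := a_pow_succ hqb hq2 (n + 2)
  have h_baq : (b * a) ^ (n + 4) * bd ^ (n + 3) = bd ^ (n + 3) * (b * a) ^ (n + 4) :=
    ((hqba.pow_pow (n + 3) (n + 4)).eq).symm
  have h_pa : ad ^ (n + 4) * a = ad ^ (n + 3) := pow_succ_a hpa hp2 (n + 2)
  have h_ba_split : (b * a) ^ (n + 4) = b ^ (n + 4) * a ^ (n + 4) := hbak (n + 4)
  have h_ap2 : a ^ (n + 4) * ad ^ 2 = a ^ (n + 2) := a_pow_p hinda 2 2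
  have h_qb2 : bd ^ (n + 3) * b ^ (n + 4) = bd * b ^ 2 := p_pow_a2 hqb hq2 (n + 2)
  have h_b2a : b ^ 2 * a ^ (n + 2) = (b * a) ^ 2 * a ^ n := by
    have hsplit_a : a ^ (n + 2) = a ^ 2 * a ^ n := by
      rw [pow_add, ((Commute.refl a).pow_pow n 2).eq]
    calc b ^ 2 * a ^ (n + 2) = b ^ 2 * (a ^ 2 * a ^ n) := by rw [hsplit_a]
      _ = (b ^ 2 * a ^ 2) * a ^ n := by rw [← mul_assoc]
      _ = (b * a) ^ 2 * a ^ n := by rw [← hbak 2]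
  have h_qba2 : bd * (b * a) ^ 2 = (b * a) ^ 2 * bd := (hqba.pow_right 2).eq
  have h_qan : bd * a ^ n = (b * a) ^ n * bd ^ (n + 1) := hqak n
  have h_combine_ba : (b * a) ^ 2 * (b * a) ^ n = (b * a) ^ (n + 2) := by
    rw [← pow_add, Nat.add_comm 2 n]
  have h_qpow_comb : bd ^ (n + 1) * bd ^ 2 = bd ^ (n + 3) := by rw [← pow_add]
  have h_pba : ad ^ (n + 3) * (b * a) ^ (n + 2) = (a * b) ^ (n + 2) * ad ^ (n + 3) :=
    hp_pow_ba (n + 2) (n + 2)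
  have h_pqswap : (a * b) ^ (n + 2) * ad ^ (n + 3) = ad ^ (n + 3) * (a * b) ^ (n + 2) :=
    ((hpab.pow_pow (n + 3) (n + 2)).eq).symm
  have P1f : ad ^ (n + 3) * ((a * b) ^ (n + 2) * bd ^ (n + 3)) = ad * bd := P1 (n + 2)
  have hS : (ad ^ (n + 4) * ((a * b) ^ (n + 3) * bd ^ (n + 4))) * ((a * b) ^ 2 * (ad ^ 2 * bd ^ 2))
      = ad * bd := by
    calc (ad ^ (n + 4) * ((a * b) ^ (n + 3) * bd ^ (n + 4))) * ((a * b) ^ 2 * (ad ^ 2 * bd ^ 2))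
        = ad ^ (n + 4) * ((a * b) ^ (n + 3) * ((bd ^ (n + 4) * (a * b) ^ 2) * (ad ^ 2 * bd ^ 2))) := by
          simp only [mul_assoc]
      _ = ad ^ (n + 4) * ((a * b) ^ (n + 3) * (((b * a) ^ 2 * bd ^ (n + 4)) * (ad ^ 2 * bd ^ 2))) := by
          rw [h_qab2]
      _ = ad ^ (n + 4) * (((a * b) ^ (n + 3) * (b * a) ^ 2) * (bd ^ (n + 4) * (ad ^ 2 * bd ^ 2))) := by
          simp only [mul_assoc]
      _ = ad ^ (n + 4) * ((a * b) ^ (n + 5) * (bd ^ (n + 4) * (ad ^ 2 * bd ^ 2))) := by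
          rw [h_abba]
      _ = ad ^ (n + 4) * (((a * (b * a) ^ (n + 4)) * b) * (bd ^ (n + 4) * (ad ^ 2 * bd ^ 2))) := by
          rw [h_split]
      _ = ad ^ (n + 4) * (a * ((b * a) ^ (n + 4) * ((b * bd ^ (n + 4)) * (ad ^ 2 * bd ^ 2)))) := by
          simp only [mul_assoc]
      _ = ad ^ (n + 4) * (a * ((b * a) ^ (n + 4) * (bd ^ (n + 3) * (ad ^ 2 * bd ^ 2)))) := by
          rw [h_bq]
      _ = ad ^ (n + 4) * (a * (((b * a) ^ (n + 4) * bd ^ (n + 3)) * (ad ^ 2 * bd ^ 2))) := by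
          simp only [mul_assoc]
      _ = ad ^ (n + 4) * (a * ((bd ^ (n + 3) * (b * a) ^ (n + 4)) * (ad ^ 2 * bd ^ 2))) := by
          rw [h_baq]
      _ = (ad ^ (n + 4) * a) * (bd ^ (n + 3) * ((b * a) ^ (n + 4) * (ad ^ 2 * bd ^ 2))) := by
          simp only [mul_assoc]
      _ = ad ^ (n + 3) * (bd ^ (n + 3) * ((b * a) ^ (n + 4) * (ad ^ 2 * bd ^ 2))) := by
          rw [h_pa]
      _ = ad ^ (n + 3) * (bd ^ (n + 3) * ((b ^ (n + 4) * a ^ (n + 4)) * (ad ^ 2 * bd ^ 2))) := by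
          rw [h_ba_split]
      _ = ad ^ (n + 3) * (bd ^ (n + 3) * (b ^ (n + 4) * ((a ^ (n + 4) * ad ^ 2) * bd ^ 2))) := by
          simp only [mul_assoc]
      _ = ad ^ (n + 3) * (bd ^ (n + 3) * (b ^ (n + 4) * (a ^ (n + 2) * bd ^ 2))) := by
          rw [h_ap2]
      _ = ad ^ (n + 3) * ((bd ^ (n + 3) * b ^ (n + 4)) * (a ^ (n + 2) * bd ^ 2)) := by
          simp only [mul_assoc]
      _ = ad ^ (n + 3) * ((bd * b ^ 2) * (a ^ (n + 2) * bd ^ 2)) := by rw [h_qb2]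
      _ = ad ^ (n + 3) * (bd * ((b ^ 2 * a ^ (n + 2)) * bd ^ 2)) := by
          simp only [mul_assoc]
      _ = ad ^ (n + 3) * (bd * (((b * a) ^ 2 * a ^ n) * bd ^ 2)) := by rw [h_b2a]
      _ = ad ^ (n + 3) * ((bd * (b * a) ^ 2) * (a ^ n * bd ^ 2)) := by
          simp only [mul_assoc]
      _ = ad ^ (n + 3) * (((b * a) ^ 2 * bd) * (a ^ n * bd ^ 2)) := by rw [h_qba2]
      _ = ad ^ (n + 3) * ((b * a) ^ 2 * ((bd * a ^ n) * bd ^ 2)) := by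
          simp only [mul_assoc]
      _ = ad ^ (n + 3) * ((b * a) ^ 2 * (((b * a) ^ n * bd ^ (n + 1)) * bd ^ 2)) := by
          rw [h_qan]
      _ = ad ^ (n + 3) * (((b * a) ^ 2 * (b * a) ^ n) * (bd ^ (n + 1) * bd ^ 2)) := by
          simp only [mul_assoc]
      _ = ad ^ (n + 3) * ((b * a) ^ (n + 2) * bd ^ (n + 3)) := by
          rw [h_combine_ba, h_qpow_comb]
      _ = (ad ^ (n + 3) * (b * a) ^ (n + 2)) * bd ^ (n + 3) := by rw [← mul_assoc]
      _ = ((a * b) ^ (n + 2) * ad ^ (n + 3)) * bd ^ (n + 3) := by rw [h_pba]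
      _ = (ad ^ (n + 3) * (a * b) ^ (n + 2)) * bd ^ (n + 3) := by rw [h_pqswap]
      _ = ad ^ (n + 3) * ((a * b) ^ (n + 2) * bd ^ (n + 3)) := by rw [mul_assoc]
      _ = ad * bd := P1f
  have P1N4 : ad ^ (n + 4) * ((a * b) ^ (n + 3) * bd ^ (n + 4)) = ad * bd := P1 (n + 3)
  have h2goal : ad * bd = (ad * bd) ^ 2 * (a * b) := by
    have step : (ad * bd) ^ 2 * (a * b)
        = (ad ^ (n + 4) * ((a * b) ^ (n + 3) * bd ^ (n + 4))) * ((a * b) ^ 2 * (ad ^ 2 * bd ^ 2)) := by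
      calc (ad * bd) ^ 2 * (a * b) = (ad * bd) * ((ad * bd) * (a * b)) := by
            rw [pow_two, mul_assoc]
        _ = (ad * bd) * ((a * b) * (ad * bd)) := by rw [hcomm]
        _ = (ad * bd) * ((a * b) ^ 2 * (ad ^ 2 * bd ^ 2)) := by rw [h_ab_pq]
        _ = (ad ^ (n + 4) * ((a * b) ^ (n + 3) * bd ^ (n + 4))) * ((a * b) ^ 2 * (ad ^ 2 * bd ^ 2)) := by
            rw [P1N4]
    exact (step.trans hS).symm
  exact ⟨hcomm, h2goal, ⟨n + 3, h3⟩⟩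
end

section
/- Let A be a ring and let a, b ∈ A be Drazin invertible. If a ∈ comm_w(b) (i.e. ab ∈ comm(a) ∩ comm(b) and ba ∈ comm(a) ∩ comm(b)), then ab is Drazin invertible with (ab)^D = a^D b^D, and moreover a^D commutes with b^D. -/
section DrazinAux

variable {A : Type*} [Ring A]

private lemma lcs {x y : A} (h : x * y = y * x) (z : A) :
    x * (y * z) = y * (x * z) := by
  rw [← mul_assoc, h, mul_assoc]

private lemma lcp {x y w : A} (h : (x * y) * w = w * (x * y)) (z : A) :
    x * (y * (w * z)) = w * (x * (y * z)) := by
  calc x * (y * (w * z)) = ((x * y) * w) * z := by simp only [mul_assoc]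
    _ = (w * (x * y)) * z := by rw [h]
    _ = w * (x * (y * z)) := by simp only [mul_assoc]

private lemma drazin_mono {a ad : A} {n : ℕ} (h3 : a ^ (n + 1) * ad = a ^ n) :
    ∀ m, n ≤ m → a ^ (m + 1) * ad = a ^ m := by
  intro m hm
  obtain ⟨k, rfl⟩ := Nat.exists_eq_add_of_le hm
  have h1 : a ^ (n + k + 1) = a ^ k * a ^ (n + 1) := by
    rw [← pow_add]; congr 1; omega
  have h2 : a ^ k * a ^ n = a ^ (n + k) := by
    rw [← pow_add]; congr 1; omega
  rw [h1, mul_assoc, h3, h2]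

private lemma drazin_comm {a ad x : A} (h : IsDrazinInverse a ad) (hx : Commute x a) :
    Commute x ad := by
  obtain ⟨hc, h2, n, h3⟩ := h
  have eca : ad * a = a * ad := hc
  have exa : x * a = a * x := hx
  have e2 : ad * (ad * a) = ad := by rw [← mul_assoc, ← pow_two]; exact h2.symm
  have e2' : a * (ad * ad) = ad := by
    calc a * (ad * ad) = ad * (ad * a) := by
          rw [← mul_assoc, ← eca, mul_assoc, ← eca]
      _ = ad := e2
  have hE : ∀ k : ℕ, (a * ad) * x = ad ^ (k + 1) * (x * a ^ (k + 1)) := by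
    intro k
    induction k with
    | zero =>
      simp only [zero_add, pow_one]
      rw [← eca, mul_assoc, ← exa]
    | succ k IH =>
      have hBk : ad ^ (k + 1 + 1) * a = ad ^ (k + 1) := by
        calc ad ^ (k + 1 + 1) * a = ad ^ (k + 1) * (ad * a) := by
              rw [pow_succ, mul_assoc]
          _ = ad ^ k * (ad * (ad * a)) := by rw [pow_succ, mul_assoc]
          _ = ad ^ k * ad := by rw [e2]
          _ = ad ^ (k + 1) := (pow_succ ad k).symm
      calc (a * ad) * x = ad ^ (k + 1) * (x * a ^ (k + 1)) := IH
        _ = (ad ^ (k + 1 + 1) * a) * (x * a ^ (k + 1)) := by rw [hBk]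
        _ = ad ^ (k + 1 + 1) * ((a * x) * a ^ (k + 1)) := by simp only [mul_assoc]
        _ = ad ^ (k + 1 + 1) * ((x * a) * a ^ (k + 1)) := by rw [← exa]
        _ = ad ^ (k + 1 + 1) * (x * a ^ (k + 1 + 1)) := by
              rw [mul_assoc, ← pow_succ']
  have hF : ∀ k : ℕ, x * (a * ad) = a ^ (k + 1) * (x * ad ^ (k + 1)) := by
    intro k
    induction k with
    | zero =>
      simp only [zero_add, pow_one]
      rw [← mul_assoc, exa, mul_assoc]
    | succ k IH =>
      have hCk : a * ad ^ (k + 1 + 1) = ad ^ (k + 1) := by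
        calc a * ad ^ (k + 1 + 1) = a * (ad * (ad * ad ^ k)) := by
              rw [pow_succ', pow_succ']
          _ = (a * (ad * ad)) * ad ^ k := by simp only [mul_assoc]
          _ = ad * ad ^ k := by rw [e2']
          _ = ad ^ (k + 1) := (pow_succ' ad k).symm
      calc x * (a * ad) = a ^ (k + 1) * (x * ad ^ (k + 1)) := IH
        _ = a ^ (k + 1) * (x * (a * ad ^ (k + 1 + 1))) := by rw [hCk]
        _ = a ^ (k + 1) * ((x * a) * ad ^ (k + 1 + 1)) := by rw [← mul_assoc x a]
        _ = a ^ (k + 1) * ((a * x) * ad ^ (k + 1 + 1)) := by rw [exa]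
        _ = (a ^ (k + 1) * a) * (x * ad ^ (k + 1 + 1)) := by simp only [mul_assoc]
        _ = a ^ (k + 1 + 1) * (x * ad ^ (k + 1 + 1)) := by rw [← pow_succ]
  have hna : a ^ (n + 1) * (a * ad) = a ^ (n + 1) := by
    rw [← mul_assoc, ← pow_succ]
    exact drazin_mono h3 (n + 1) (Nat.le_succ n)
  have han : (a * ad) * a ^ (n + 1) = a ^ (n + 1) := by
    have c1 : Commute (a * ad) (a ^ (n + 1)) :=
      (((Commute.refl a).mul_right hc.symm).symm).pow_right (n + 1)
    rw [c1.eq]; exact hna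
  have hxe : x * (a * ad) = (a * ad) * x := by
    have way1 : (a * ad) * (x * (a * ad)) = x * (a * ad) := by
      calc (a * ad) * (x * (a * ad))
          = (a * ad) * (a ^ (n + 1) * (x * ad ^ (n + 1))) := by rw [hF n]
        _ = ((a * ad) * a ^ (n + 1)) * (x * ad ^ (n + 1)) := by rw [← mul_assoc]
        _ = a ^ (n + 1) * (x * ad ^ (n + 1)) := by rw [han]
        _ = x * (a * ad) := (hF n).symm
    have way2 : (a * ad) * (x * (a * ad)) = (a * ad) * x := by
      calc (a * ad) * (x * (a * ad))
          = ((a * ad) * x) * (a * ad) := by rw [← mul_assoc]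
        _ = (ad ^ (n + 1) * (x * a ^ (n + 1))) * (a * ad) := by rw [hE n]
        _ = ad ^ (n + 1) * (x * (a ^ (n + 1) * (a * ad))) := by simp only [mul_assoc]
        _ = ad ^ (n + 1) * (x * a ^ (n + 1)) := by rw [hna]
        _ = (a * ad) * x := (hE n).symm
    rw [← way1, way2]
  have e3 : ad * (a * ad) = ad := by
    calc ad * (a * ad) = ad * (ad * a) := by rw [← eca]
      _ = ad := e2
  have e4 : (a * ad) * ad = ad := by
    calc (a * ad) * ad = a * (ad * ad) := mul_assoc _ _ _
      _ = ad := e2'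
  have key : ad * x = x * ad := by
    calc ad * x = (ad * (a * ad)) * x := by rw [e3]
      _ = ad * (x * (a * ad)) := by rw [mul_assoc, ← hxe]
      _ = ad * ((a * x) * ad) := by rw [← mul_assoc x a, exa]
      _ = ((a * ad) * x) * ad := by rw [← mul_assoc, ← mul_assoc, eca]
      _ = (x * (a * ad)) * ad := by rw [hxe]
      _ = x * ad := by rw [mul_assoc, e4]
  exact key.symm

private lemma drazin_sq {a ad : A} (h : IsDrazinInverse a ad) :
    IsDrazinInverse (a ^ 2) (ad ^ 2) := by
  obtain ⟨hc, h2, n, h3⟩ := h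
  refine ⟨hc.pow_pow 2 2, ?_, n, ?_⟩
  · have eca : ad * a = a * ad := hc
    have e2 : ad = ad * ad * a := by rw [← pow_two]; exact h2
    have ea2' : (ad * ad) * a = a * (ad * ad) :=
      ((hc.symm.mul_right hc.symm).symm).eq
    calc ad ^ 2 = ad * ad := pow_two ad
      _ = (ad * ad * a) * (ad * ad * a) := by conv_lhs => rw [e2]
      _ = (ad ^ 2) ^ 2 * a ^ 2 := by
          simp only [pow_two, mul_assoc]
          rw [← lcp ea2' a]
  · have m1 : a ^ (2 * n + 2) * ad = a ^ (2 * n + 1) := by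
      have h := drazin_mono h3 (2 * n + 1) (by omega)
      rwa [show 2 * n + 1 + 1 = 2 * n + 2 by omega] at h
    have m2 : a ^ (2 * n + 1) * ad = a ^ (2 * n) := by
      have h := drazin_mono h3 (2 * n) (by omega)
      exact h
    have e1 : (a ^ 2) ^ (n + 1) = a ^ (2 * n + 2) := by
      rw [show 2 * n + 2 = 2 * (n + 1) by omega, pow_mul]
    have e2 : (a ^ 2) ^ n = a ^ (2 * n) := by
      rw [pow_mul]
    calc (a ^ 2) ^ (n + 1) * ad ^ 2 = a ^ (2 * n + 2) * (ad * ad) := by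
          rw [e1, pow_two]
      _ = (a ^ (2 * n + 2) * ad) * ad := by rw [← mul_assoc]
      _ = a ^ (2 * n + 1) * ad := by rw [m1]
      _ = a ^ (2 * n) := m2
      _ = (a ^ 2) ^ n := e2.symm

end DrazinAux

theorem drazin_inverse_mul_comm_w {A : Type*} [Ring A] (a b ad bd : A)
    (ha : IsDrazinInverse a ad) (hb : IsDrazinInverse b bd)
    (hab_a : Commute (a * b) a) (hab_b : Commute (a * b) b)
    (hba_a : Commute (b * a) a) (hba_b : Commute (b * a) b) :
    IsDrazinInverse (a * b) (ad * bd) ∧ Commute ad bd := by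
  obtain ⟨n, h3a⟩ := ha.2.2
  obtain ⟨m, h3b⟩ := hb.2.2
  have h2a' : ad = ad * (ad * a) := by rw [← mul_assoc, ← pow_two]; exact ha.2.1
  have h2b' : bd = bd * (bd * b) := by rw [← mul_assoc, ← pow_two]; exact hb.2.1
  -- basic derived commutation facts
  have eab_a : (a * b) * a = a * (a * b) := hab_a
  have eab_b : (a * b) * b = b * (a * b) := hab_b
  have eba_a : (b * a) * a = a * (b * a) := hba_a
  have eba_b : (b * a) * b = b * (b * a) := hba_b
  have ca2b : Commute (a ^ 2) b := by
    have : a ^ 2 * b = b * a ^ 2 := by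
      rw [pow_two]
      calc a * a * b = a * (a * b) := by rw [mul_assoc]
        _ = (a * b) * a := hab_a.symm
        _ = a * (b * a) := by rw [mul_assoc]
        _ = (b * a) * a := hba_a.symm
        _ = b * (a * a) := by rw [mul_assoc]
    exact this
  have cb2a : Commute (b ^ 2) a := by
    have : b ^ 2 * a = a * b ^ 2 := by
      rw [pow_two]
      calc b * b * a = b * (b * a) := by rw [mul_assoc]
        _ = (b * a) * b := hba_b.symm
        _ = b * (a * b) := by rw [mul_assoc]
        _ = (a * b) * b := hab_b.symm
        _ = a * (b * b) := by rw [mul_assoc]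
    exact this
  have hsa := drazin_sq ha
  have hsb := drazin_sq hb
  have cab_ad : Commute (a * b) ad := drazin_comm ha hab_a
  have cab_bd : Commute (a * b) bd := drazin_comm hb hab_b
  have ca2bd : Commute (a ^ 2) bd := drazin_comm hb ca2b
  have cb2ad : Commute (b ^ 2) ad := drazin_comm ha cb2a
  have cbd_ad2 : Commute bd (ad ^ 2) := drazin_comm hsa ca2bd.symm
  have ca_bd2 : Commute a (bd ^ 2) := drazin_comm hsb cb2a.symm
  have cb_ad2 : Commute b (ad ^ 2) := drazin_comm hsa ca2b.symm
  -- pair-form equalities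
  have pbd_a : (bd * bd) * a = a * (bd * bd) := by
    have h := ca_bd2.eq.symm; rwa [pow_two] at h
  have pad_b : (ad * ad) * b = b * (ad * ad) := by
    have h := cb_ad2.eq.symm; rwa [pow_two] at h
  have pad_bd : (ad * ad) * bd = bd * (ad * ad) := by
    have h := cbd_ad2.eq.symm; rwa [pow_two] at h
  have pab_bd : (a * b) * bd = bd * (a * b) := cab_bd.eq
  have pab_ad : (a * b) * ad = ad * (a * b) := cab_ad.eq
  have pb2a : (b * b) * a = a * (b * b) := by
    have h := cb2a.eq; rwa [pow_two] at h
  have s1 : b * (a * b) = a * (b * b) := by rw [← eab_b, mul_assoc]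
  -- key identities
  have I1 : ad * bd = ad * (ad * (bd * (bd * (a * b)))) := by
    conv_lhs => rw [h2a', h2b']
    simp only [mul_assoc]
    rw [← lcp pbd_a b]
  have I2 : bd * ad = ad * (ad * (bd * (bd * (b * a)))) := by
    conv_lhs => rw [h2b', h2a']
    simp only [mul_assoc]
    rw [← lcp pad_b a, ← lcp pad_bd (b * a), ← lcp pad_bd (bd * (b * a))]
  have I1z : ∀ z : A, ad * (bd * z) = ad * (ad * (bd * (bd * (a * (b * z))))) := by
    intro z
    rw [← mul_assoc, I1]
    simp only [mul_assoc]
  have I3z : ∀ z : A, ad * (ad * (bd * (bd * z)))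
      = ad * (ad * (ad * (bd * (bd * (bd * (a * (b * z))))))) := by
    intro z
    rw [I1z (bd * z), lcp pab_bd z]
  have comm_d : ad * bd = bd * ad := by
    rw [I1, I2, I3z (a * b), I3z (b * a)]
    have t2 : b * (b * a) = a * (b * b) := by rw [← mul_assoc]; exact pb2a
    rw [s1, t2]
  -- Drazin axioms for a*b with inverse ad*bd
  have ax1 : (ad * bd) * (a * b) = (a * b) * (ad * bd) := by
    rw [mul_assoc, ← pab_bd, ← mul_assoc, ← pab_ad, mul_assoc]
  have ax2 : ad * bd = (ad * bd) ^ 2 * (a * b) := by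
    calc ad * bd = ad * (ad * (bd * (bd * (a * b)))) := I1
      _ = (ad * bd) ^ 2 * (a * b) := by
          rw [pow_two]
          simp only [mul_assoc]
          rw [lcs comm_d.symm (bd * (a * b))]
  -- power identities
  have Q : ∀ j : ℕ, b ^ j * (a * b) = a * b ^ (j + 1) := by
    intro j
    induction j with
    | zero => simp
    | succ j IH =>
      calc b ^ (j + 1) * (a * b) = b * (b ^ j * (a * b)) := by
            rw [pow_succ', mul_assoc]
        _ = b * (a * b ^ (j + 1)) := by rw [IH]
        _ = (b * (a * b)) * b ^ j := by rw [pow_succ' b j]; simp only [mul_assoc]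
        _ = (a * (b * b)) * b ^ j := by rw [s1]
        _ = a * b ^ (j + 1 + 1) := by
            rw [pow_succ' b (j + 1), pow_succ' b j]; simp only [mul_assoc]
  have P : ∀ j : ℕ, (a * b) ^ j = a ^ j * b ^ j := by
    intro j
    induction j with
    | zero => simp
    | succ j IH =>
      calc (a * b) ^ (j + 1) = (a ^ j * b ^ j) * (a * b) := by rw [pow_succ, IH]
        _ = a ^ j * (b ^ j * (a * b)) := mul_assoc _ _ _
        _ = a ^ j * (a * b ^ (j + 1)) := by rw [Q j]
        _ = a ^ (j + 1) * b ^ (j + 1) := by rw [← mul_assoc, ← pow_succ]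
  have ax3 : (a * b) ^ (2 * (n + m) + 1 + 1) * (ad * bd) = (a * b) ^ (2 * (n + m) + 1) := by
    have hbk : b ^ (2 * (n + m) + 1 + 1) * ad = ad * b ^ (2 * (n + m) + 1 + 1) := by
      have h1 : b ^ (2 * (n + m) + 1 + 1) = (b ^ 2) ^ (n + m + 1) := by
        rw [show 2 * (n + m) + 1 + 1 = 2 * (n + m + 1) by omega, pow_mul]
      rw [h1]
      exact (cb2ad.pow_left (n + m + 1)).eq
    have m1 : a ^ (2 * (n + m) + 1 + 1) * ad = a ^ (2 * (n + m) + 1) :=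
      drazin_mono h3a _ (by omega)
    have m2 : b ^ (2 * (n + m) + 1 + 1) * bd = b ^ (2 * (n + m) + 1) :=
      drazin_mono h3b _ (by omega)
    calc (a * b) ^ (2 * (n + m) + 1 + 1) * (ad * bd)
        = (a ^ (2 * (n + m) + 1 + 1) * b ^ (2 * (n + m) + 1 + 1)) * (ad * bd) := by
          rw [P]
      _ = a ^ (2 * (n + m) + 1 + 1) * (ad * (b ^ (2 * (n + m) + 1 + 1) * bd)) := by
          rw [mul_assoc, lcs hbk bd]
      _ = (a ^ (2 * (n + m) + 1 + 1) * ad) * (b ^ (2 * (n + m) + 1 + 1) * bd) := by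
          rw [← mul_assoc]
      _ = a ^ (2 * (n + m) + 1) * b ^ (2 * (n + m) + 1) := by rw [m1, m2]
      _ = (a * b) ^ (2 * (n + m) + 1) := (P _).symm
  exact ⟨⟨ax1, ax2, ⟨2 * (n + m) + 1, ax3⟩⟩, comm_d⟩
end

section
/- Let A be a ring and a ∈ A. If there exist b ∈ A and n ∈ ℕ such that a commutes with ab, a commutes with ba, bab = b, and b·a^{n+1} = aⁿ, then a is Drazin invertible with a^D = b (in particular ab = ba). -/
theorem drazin_from_weak_comm {A : Type*} [Ring A] (a b : A) (n : ℕ)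
    (h1 : Commute a (a * b)) (h2 : Commute a (b * a))
    (h3 : b * a * b = b) (h4 : b * a ^ (n + 1) = a ^ n) :
    IsDrazinInverse a b ∧ a * b = b * a := by
  have key1 : b * a * (a * b) = b * a := by
    calc b * a * (a * b) = b * (a * (a * b)) := by rw [mul_assoc]
      _ = b * ((a * b) * a) := by rw [h1.eq]
      _ = b * a * b * a := by rw [← mul_assoc, ← mul_assoc]
      _ = b * a := by rw [h3]
  have hba : a * b = b * a := by
    calc a * b = a * (b * a * b) := by rw [h3]
      _ = (a * (b * a)) * b := (mul_assoc a (b * a) b).symm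
      _ = ((b * a) * a) * b := by rw [h2.eq]
      _ = (b * a) * (a * b) := by rw [mul_assoc]
      _ = b * a := key1
  refine ⟨⟨hba.symm, ?_, n, ?_⟩, hba⟩
  · calc b = b * a * b := h3.symm
      _ = b * (a * b) := by rw [mul_assoc]
      _ = b * (b * a) := by rw [hba]
      _ = b ^ 2 * a := by rw [← mul_assoc, ← pow_two]
  · calc a ^ (n + 1) * b = b * a ^ (n + 1) := ((show Commute a b from hba).pow_left (n + 1)).eq
      _ = a ^ n := h4
end

section
/- Let X be a Banach space and S, T ∈ L(X). If ST commutes with T, then the analytic core K(T) is S-invariant, where K(T) is the set of x ∈ X for which there exist ε > 0 and a sequence (xₙ) with x₀ = x, T x_{n+1} = xₙ for all n, and supₙ ‖xₙ‖^{1/n} < ∞. -/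
/-- The analytic core of an operator `T`. -/
def analyticCore {X : Type*} [NormedAddCommGroup X] [NormedSpace ℂ X]
    (T : X →L[ℂ] X) : Set X :=
  {x : X | ∃ u : ℕ → X, u 0 = x ∧ (∀ n : ℕ, T (u (n + 1)) = u n) ∧
    BddAbove (Set.range fun n : ℕ => ‖u n‖ ^ ((1 : ℝ) / n))}

theorem analyticCore_invariant {X : Type*} [NormedAddCommGroup X] [NormedSpace ℂ X]
    [CompleteSpace X] (S T : X →L[ℂ] X) (h : Commute (S * T) T) :
    ∀ x ∈ analyticCore T, S x ∈ analyticCore T := by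
  rintro x ⟨u, hu0, hrec, ⟨B, hB⟩⟩
  refine ⟨fun n => (S * T) (u (n + 1)), ?_, ?_, ?_⟩
  · simp only [ContinuousLinearMap.mul_apply, hrec 0, hu0]
  · intro n
    have hc := congrArg (fun f : X →L[ℂ] X => f (u (n + 2))) h
    simp only [ContinuousLinearMap.mul_apply] at hc ⊢
    -- hc : S (T (T (u (n+2)))) = T (S (T (u (n+2))))
    rw [← hc, hrec (n + 1)]
  · set M := max B 1 with hMdef
    set C := max ‖S * T‖ 1 with hCdef
    have hM1 : (1:ℝ) ≤ M := le_max_right _ _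
    have hC1 : (1:ℝ) ≤ C := le_max_right _ _
    have hM0 : (0:ℝ) ≤ M := by linarith
    have hC0 : (0:ℝ) ≤ C := by linarith
    refine ⟨C * M ^ 2, ?_⟩
    rintro y ⟨n, rfl⟩
    rcases Nat.eq_zero_or_pos n with hn | hn
    · subst hn
      simp only [Nat.cast_zero, div_zero, Real.rpow_zero]
      nlinarith
    · have hn' : (1:ℝ) ≤ (n:ℝ) := by exact_mod_cast hn
      have hnpos : (0:ℝ) < (n:ℝ) := by linarith
      have hu : ‖u (n + 1)‖ ≤ M ^ (((n + 1 : ℕ) : ℝ)) := by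
        have h1 : ‖u (n + 1)‖ ^ ((1:ℝ) / ((n + 1 : ℕ) : ℝ)) ≤ M :=
          le_trans (hB ⟨n + 1, rfl⟩) (le_max_left _ _)
        have h2 := Real.rpow_le_rpow (Real.rpow_nonneg (norm_nonneg _) _) h1
          (by positivity : (0:ℝ) ≤ ((n + 1 : ℕ) : ℝ))
        rwa [← Real.rpow_mul (norm_nonneg _), one_div,
          inv_mul_cancel₀ (by positivity), Real.rpow_one] at h2
      have hv : ‖(S * T) (u (n + 1))‖ ≤ C * M ^ (((n + 1 : ℕ) : ℝ)) := by
        calc ‖(S * T) (u (n + 1))‖ ≤ ‖S * T‖ * ‖u (n + 1)‖ := (S * T).le_opNorm _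
          _ ≤ C * M ^ (((n + 1 : ℕ) : ℝ)) :=
            mul_le_mul (le_max_left _ _) hu (norm_nonneg _) hC0
      have key : ‖(S * T) (u (n + 1))‖ ^ ((1:ℝ) / (n:ℝ)) ≤
          (C * M ^ (((n + 1 : ℕ) : ℝ))) ^ ((1:ℝ) / (n:ℝ)) :=
        Real.rpow_le_rpow (norm_nonneg _) hv (by positivity)
      refine key.trans ?_
      rw [Real.mul_rpow hC0 (Real.rpow_nonneg hM0 _), ← Real.rpow_mul hM0]
      have e1 : C ^ ((1:ℝ) / (n:ℝ)) ≤ C := by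
        calc C ^ ((1:ℝ) / (n:ℝ)) ≤ C ^ (1:ℝ) :=
              Real.rpow_le_rpow_of_exponent_le hC1 (by rw [div_le_one hnpos]; linarith)
          _ = C := Real.rpow_one _
      have e2 : M ^ ((((n + 1 : ℕ) : ℝ)) * ((1:ℝ) / (n:ℝ))) ≤ M ^ (2:ℝ) := by
        apply Real.rpow_le_rpow_of_exponent_le hM1
        rw [mul_one_div, div_le_iff₀ hnpos]
        push_cast; linarith
      have e3 : M ^ (2:ℝ) = M ^ 2 := by
        rw [← Real.rpow_natCast M 2]; norm_num
      calc C ^ ((1:ℝ) / (n:ℝ)) * M ^ ((((n + 1 : ℕ) : ℝ)) * ((1:ℝ) / (n:ℝ)))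
          ≤ C * M ^ (2:ℝ) := mul_le_mul e1 e2 (Real.rpow_nonneg hM0 _) hC0
        _ = C * M ^ 2 := by rw [e3]
end

section
/- Let T ∈ L(X) be a pseudo invertible operator and S ∈ comm²(T) a pseudo inverse of T (S = S²T). Then TS is a projection, (M, N) := (R(TS), N(TS)) is a pair of closed complementary subspaces invariant under every operator commuting with T, T|_M is invertible, and S = (T|_M)^{-1} ⊕ 0|_N with respect to X = M ⊕ N. -/
/-!
`P := T S` is idempotent because `(T S)² = T S² T = T S`, and every operator commuting with `T`
commutes with `S`, hence with `P`, so it leaves `R(P)` and `N(P)` invariant. On `R(P)` the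
operators `T` and `S` are mutually inverse since `T S = S T = P` acts there as the identity,
and `S` kills `N(P)` because `S = S P`.
-/

structure IsPseudoInverse {R : Type*} [Monoid R] (T S : R) : Prop where
  commute_of_commute : ∀ U : R, Commute U T → Commute U S
  eq_sq_mul : S = S ^ 2 * T

namespace IsPseudoInverse

section Monoid

variable {R : Type*} [Monoid R] {T S : R}

theorem commute (h : IsPseudoInverse T S) : Commute T S :=
  h.commute_of_commute T (Commute.refl T)

theorem mul_mul_eq (h : IsPseudoInverse T S) : S * (T * S) = S := by
  rw [h.commute.eq, ← mul_assoc, ← sq, ← h.eq_sq_mul]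

theorem isIdempotentElem_mul (h : IsPseudoInverse T S) : IsIdempotentElem (T * S) := by
  rw [IsIdempotentElem, mul_assoc, h.mul_mul_eq]

theorem commute_mul_of_commute (h : IsPseudoInverse T S) {U : R} (hU : Commute U T) :
    Commute U (T * S) :=
  hU.mul_right (h.commute_of_commute U hU)

end Monoid

section Operator

open LinearMap (range ker)
open ContinuousLinearMap (IsIdempotentElem.commute_iff IsIdempotentElem.toLinearMap)

variable {R M : Type*} [Ring R] [TopologicalSpace M] [AddCommGroup M] [Module R M]
  {T S : M →L[R] M}

theorem range_mem_invtSubmodule_and_ker_mem_invtSubmodule (h : IsPseudoInverse T S)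
    {U : M →L[R] M} (hU : Commute U T) :
    range (T * S : M →ₗ[R] M) ∈ Module.End.invtSubmodule (U : M →ₗ[R] M) ∧
      ker (T * S : M →ₗ[R] M) ∈ Module.End.invtSubmodule (U : M →ₗ[R] M) :=
  (IsIdempotentElem.commute_iff h.isIdempotentElem_mul).mp (h.commute_mul_of_commute hU).symm

theorem mapsTo_range_of_commute (h : IsPseudoInverse T S) {U : M →L[R] M} (hU : Commute U T)
    {x : M} (hx : x ∈ range (T * S : M →ₗ[R] M)) : U x ∈ range (T * S : M →ₗ[R] M) :=
  (h.range_mem_invtSubmodule_and_ker_mem_invtSubmodule hU).1 hx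

theorem mapsTo_ker_of_commute (h : IsPseudoInverse T S) {U : M →L[R] M} (hU : Commute U T)
    {x : M} (hx : x ∈ ker (T * S : M →ₗ[R] M)) : U x ∈ ker (T * S : M →ₗ[R] M) :=
  (h.range_mem_invtSubmodule_and_ker_mem_invtSubmodule hU).2 hx

theorem apply_apply_of_mem_range (h : IsPseudoInverse T S) {x : M}
    (hx : x ∈ range (T * S : M →ₗ[R] M)) : T (S x) = x :=
  (LinearMap.IsIdempotentElem.mem_range_iff
    (IsIdempotentElem.toLinearMap h.isIdempotentElem_mul)).mp hx

theorem eq_zero_of_mem_range_of_apply_eq_zero (h : IsPseudoInverse T S) {x : M}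
    (hx : x ∈ range (T * S : M →ₗ[R] M)) (hTx : T x = 0) : x = 0 :=
  calc x = T (S x) := (h.apply_apply_of_mem_range hx).symm
    _ = S (T x) := DFunLike.congr_fun h.commute.eq x
    _ = 0 := by rw [hTx, map_zero]

theorem apply_eq_zero_of_mem_ker (h : IsPseudoInverse T S) {x : M}
    (hx : x ∈ ker (T * S : M →ₗ[R] M)) : S x = 0 :=
  calc S x = S (T (S x)) := (DFunLike.congr_fun h.mul_mul_eq x).symm
    _ = 0 := by rw [show T (S x) = 0 from hx, map_zero]

end Operator

end IsPseudoInverse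

theorem pseudo_inverse_structure_general {X : Type*} [NormedAddCommGroup X]
    [NormedSpace ℂ X] (T S : X →L[ℂ] X)
    (hS2 : ∀ U : X →L[ℂ] X, Commute U T → Commute U S) (hS : S = S ^ 2 * T) :
    (T * S) * (T * S) = T * S ∧
    IsClosed ((LinearMap.range ((T * S : X →L[ℂ] X) : X →ₗ[ℂ] X) : Submodule ℂ X) : Set X) ∧
    IsClosed ((LinearMap.ker ((T * S : X →L[ℂ] X) : X →ₗ[ℂ] X) : Submodule ℂ X) : Set X) ∧
    IsCompl (LinearMap.range ((T * S : X →L[ℂ] X) : X →ₗ[ℂ] X)) (LinearMap.ker ((T * S : X →L[ℂ] X) : X →ₗ[ℂ] X)) ∧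
    (∀ U : X →L[ℂ] X, Commute U T →
      (∀ x ∈ LinearMap.range ((T * S : X →L[ℂ] X) : X →ₗ[ℂ] X), U x ∈ LinearMap.range ((T * S : X →L[ℂ] X) : X →ₗ[ℂ] X)) ∧
      (∀ x ∈ LinearMap.ker ((T * S : X →L[ℂ] X) : X →ₗ[ℂ] X), U x ∈ LinearMap.ker ((T * S : X →L[ℂ] X) : X →ₗ[ℂ] X))) ∧
    (∀ x ∈ LinearMap.range ((T * S : X →L[ℂ] X) : X →ₗ[ℂ] X), T x ∈ LinearMap.range ((T * S : X →L[ℂ] X) : X →ₗ[ℂ] X)) ∧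
    (∀ x ∈ LinearMap.range ((T * S : X →L[ℂ] X) : X →ₗ[ℂ] X), T x = 0 → x = 0) ∧
    (∀ y ∈ LinearMap.range ((T * S : X →L[ℂ] X) : X →ₗ[ℂ] X), ∃ x ∈ LinearMap.range ((T * S : X →L[ℂ] X) : X →ₗ[ℂ] X), T x = y) ∧
    (∀ x ∈ LinearMap.range ((T * S : X →L[ℂ] X) : X →ₗ[ℂ] X), S x ∈ LinearMap.range ((T * S : X →L[ℂ] X) : X →ₗ[ℂ] X) ∧ T (S x) = x) ∧
    (∀ x ∈ LinearMap.ker ((T * S : X →L[ℂ] X) : X →ₗ[ℂ] X), S x = 0) := by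
  have h : IsPseudoInverse T S := ⟨hS2, hS⟩
  have hP : IsIdempotentElem (T * S) := h.isIdempotentElem_mul
  have hS_range {x : X} (hx : x ∈ LinearMap.range ((T * S : X →L[ℂ] X) : X →ₗ[ℂ] X)) :
      S x ∈ LinearMap.range ((T * S : X →L[ℂ] X) : X →ₗ[ℂ] X) :=
    h.mapsTo_range_of_commute h.commute.symm hx
  refine ⟨hP.eq, ContinuousLinearMap.IsIdempotentElem.isClosed_range hP,
    ContinuousLinearMap.isClosed_ker _,
    LinearMap.IsIdempotentElem.isCompl (ContinuousLinearMap.IsIdempotentElem.toLinearMap hP),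
    fun U hU => ⟨fun _ => h.mapsTo_range_of_commute hU, fun _ => h.mapsTo_ker_of_commute hU⟩,
    fun _ => h.mapsTo_range_of_commute (Commute.refl T),
    fun _ => h.eq_zero_of_mem_range_of_apply_eq_zero,
    fun y hy => ⟨S y, hS_range hy, h.apply_apply_of_mem_range hy⟩,
    fun x hx => ⟨hS_range hx, h.apply_apply_of_mem_range hx⟩,
    fun _ => h.apply_eq_zero_of_mem_ker⟩

theorem pseudo_inverse_structure {X : Type*} [NormedAddCommGroup X]
    [NormedSpace ℂ X] [CompleteSpace X] (T S : X →L[ℂ] X)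
    (hS2 : ∀ U : X →L[ℂ] X, Commute U T → Commute U S) (hS : S = S ^ 2 * T) :
    (T * S) * (T * S) = T * S ∧
    IsClosed ((LinearMap.range ((T * S : X →L[ℂ] X) : X →ₗ[ℂ] X) : Submodule ℂ X) : Set X) ∧
    IsClosed ((LinearMap.ker ((T * S : X →L[ℂ] X) : X →ₗ[ℂ] X) : Submodule ℂ X) : Set X) ∧
    IsCompl (LinearMap.range ((T * S : X →L[ℂ] X) : X →ₗ[ℂ] X)) (LinearMap.ker ((T * S : X →L[ℂ] X) : X →ₗ[ℂ] X)) ∧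
    (∀ U : X →L[ℂ] X, Commute U T →
      (∀ x ∈ LinearMap.range ((T * S : X →L[ℂ] X) : X →ₗ[ℂ] X), U x ∈ LinearMap.range ((T * S : X →L[ℂ] X) : X →ₗ[ℂ] X)) ∧
      (∀ x ∈ LinearMap.ker ((T * S : X →L[ℂ] X) : X →ₗ[ℂ] X), U x ∈ LinearMap.ker ((T * S : X →L[ℂ] X) : X →ₗ[ℂ] X))) ∧
    (∀ x ∈ LinearMap.range ((T * S : X →L[ℂ] X) : X →ₗ[ℂ] X), T x ∈ LinearMap.range ((T * S : X →L[ℂ] X) : X →ₗ[ℂ] X)) ∧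
    (∀ x ∈ LinearMap.range ((T * S : X →L[ℂ] X) : X →ₗ[ℂ] X), T x = 0 → x = 0) ∧
    (∀ y ∈ LinearMap.range ((T * S : X →L[ℂ] X) : X →ₗ[ℂ] X), ∃ x ∈ LinearMap.range ((T * S : X →L[ℂ] X) : X →ₗ[ℂ] X), T x = y) ∧
    (∀ x ∈ LinearMap.range ((T * S : X →L[ℂ] X) : X →ₗ[ℂ] X), S x ∈ LinearMap.range ((T * S : X →L[ℂ] X) : X →ₗ[ℂ] X) ∧ T (S x) = x) ∧
    (∀ x ∈ LinearMap.ker ((T * S : X →L[ℂ] X) : X →ₗ[ℂ] X), S x = 0) :=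
  pseudo_inverse_structure_general T S hS2 hS
end

section
/- Let X be a Banach space and S, T ∈ L(X) with S ∈ comm_w(T). Then for all integers m ≥ 1 and n ≥ 3, the dimension of the quotient N(Tⁿ) / (N((T+S)^{n+m-1}) ∩ N(Tⁿ)) is at most dim R(S^m), and likewise dim N((T+S)ⁿ) / (N(T^{n+m-1}) ∩ N((T+S)ⁿ)) ≤ dim R(S^m). -/
/-!
Under weak commutativity every word of length `k ≥ 3` in `S` and `T` with `j` letters `T` equals
`S ^ (k - j) * T ^ j` (this fails for `k = 2`, where `T * S` cannot be reordered), so `(T + S) ^ k`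
is an `ℕ`-combination of the monomials `S ^ i * T ^ j` with `i + j = k`. For `k = n + m - 1` each
monomial has `i ≥ m` or `j ≥ n`, hence `(T + S) ^ k = S ^ m * A + B * T ^ n`. Thus `(T + S) ^ k`
maps `N(T ^ n)` into `R(S ^ m)`, with kernel `N((T + S) ^ k) ∩ N(T ^ n)`. The second inequality is
the first one for the weakly commuting pair `(-S, T + S)`.
-/

open LinearMap

universe u

/-- `S ∈ comm_w(T)` in the paper's notation. -/
structure WeakCommute {R : Type*} [Mul R] (S T : R) : Prop where
  commute_st_s : Commute (S * T) S
  commute_st_t : Commute (S * T) T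
  commute_ts_s : Commute (T * S) S
  commute_ts_t : Commute (T * S) T

section NormalForms

variable {R : Type*} [Semiring R] {S T : R}

def normalForms (S T : R) (k : ℕ) : AddSubmonoid R :=
  AddSubmonoid.closure {x | ∃ i j, i + j = k ∧ S ^ i * T ^ j = x}

theorem pow_mul_pow_mem_normalForms {i j k : ℕ} (h : i + j = k) :
    S ^ i * T ^ j ∈ normalForms S T k :=
  AddSubmonoid.subset_closure ⟨i, j, h, rfl⟩

theorem normalForms_le_mrange_sup {k m n : ℕ} (hmn : m + n ≤ k + 1) :
    normalForms S T k ≤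
      AddMonoidHom.mrange (AddMonoidHom.mulLeft (S ^ m)) ⊔
        AddMonoidHom.mrange (AddMonoidHom.mulRight (T ^ n)) := by
  rw [normalForms, AddSubmonoid.closure_le]
  rintro _ ⟨i, j, rfl, rfl⟩
  by_cases hj : n ≤ j
  · refine AddSubmonoid.mem_sup_right ⟨S ^ i * T ^ (j - n), ?_⟩
    simp [mul_assoc, ← pow_add, Nat.sub_add_cancel hj]
  · refine AddSubmonoid.mem_sup_left ⟨S ^ (i - m) * T ^ j, ?_⟩
    simp [← mul_assoc, ← pow_add, Nat.add_sub_cancel' (by omega : m ≤ i)]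

end NormalForms

namespace WeakCommute

variable {R : Type*} [Ring R] {S T : R}

theorem mul_mul_self_left (h : WeakCommute S T) : S * T * S = S * S * T := by
  rw [h.commute_st_s.eq, mul_assoc]

theorem mul_mul_self_right (h : WeakCommute S T) : T * S * T = S * T * T := by
  rw [h.commute_st_t.eq, mul_assoc]

theorem commute_mul_self (h : WeakCommute S T) : Commute (S * S) T := by
  calc S * S * T = S * T * S := h.mul_mul_self_left.symm
    _ = T * S * S := by rw [mul_assoc, ← h.commute_ts_s.eq, mul_assoc]
    _ = T * (S * S) := mul_assoc _ _ _

theorem pow_add_two_mul (h : WeakCommute S T) (j : ℕ) : T ^ (j + 2) * S = S * T ^ (j + 2) := by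
  induction j with
  | zero =>
    rw [pow_two, mul_assoc, ← h.commute_ts_t.eq, h.mul_mul_self_right, mul_assoc]
  | succ j ih =>
    calc T ^ (j + 1 + 2) * S = T * (T ^ (j + 2) * S) := by rw [pow_succ', mul_assoc]
      _ = T * S * T * T ^ (j + 1) := by rw [ih, pow_succ' T (j + 1)]; simp only [mul_assoc]
      _ = S * T ^ (j + 1 + 2) := by rw [h.mul_mul_self_right]; simp only [mul_assoc, ← pow_succ']

theorem pow_mul_pow_mul (h : WeakCommute S T) {i j : ℕ} (hij : 3 ≤ i + j) :
    S ^ i * T ^ j * S = S ^ (i + 1) * T ^ j := by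
  match i, j, hij with
  | i, 0, _ => rw [pow_zero, mul_one, mul_one, pow_succ]
  | i + 2, 1, _ =>
    calc S ^ (i + 2) * T ^ 1 * S = S ^ (i + 1) * (S * T * S) := by
          simp only [pow_succ, pow_zero, one_mul, mul_assoc]
      _ = S ^ (i + 2 + 1) * T ^ 1 := by
          rw [h.mul_mul_self_left]; simp only [pow_succ, pow_zero, one_mul, mul_assoc]
  | i, j + 2, _ => rw [mul_assoc, h.pow_add_two_mul, ← mul_assoc, ← pow_succ]

theorem add_pow_three_mem_normalForms (h : WeakCommute S T) :
    (T + S) ^ 3 ∈ normalForms S T 3 := by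
  have hTTS : T * T * S = S * T * T := by simpa [pow_two, mul_assoc] using h.pow_add_two_mul 0
  have hTSS : T * S * S = S * S * T := by rw [mul_assoc, ← h.commute_mul_self.eq]
  have e : (T + S) ^ 3 =
      S ^ 0 * T ^ 3 + 3 • (S ^ 1 * T ^ 2) + 3 • (S ^ 2 * T ^ 1) + S ^ 3 * T ^ 0 :=
    calc (T + S) ^ 3 = T * T * T + (T * T * S + T * S * T + S * T * T) +
          (T * S * S + S * T * S + S * S * T) + S * S * S := by noncomm_ring
      _ = T * T * T + (S * T * T + S * T * T + S * T * T) +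
          (S * S * T + S * S * T + S * S * T) + S * S * S := by
        rw [hTTS, h.mul_mul_self_right, hTSS, h.mul_mul_self_left]
      _ = _ := by noncomm_ring
  rw [e]
  have mem {i j : ℕ} (hij : i + j = 3) := pow_mul_pow_mem_normalForms (S := S) (T := T) hij
  exact add_mem (add_mem (add_mem (mem rfl) (nsmul_mem (mem rfl) 3)) (nsmul_mem (mem rfl) 3))
    (mem rfl)

theorem mul_add_mem_normalForms (h : WeakCommute S T) {k : ℕ} (hk : 3 ≤ k) {x : R}
    (hx : x ∈ normalForms S T k) : x * (T + S) ∈ normalForms S T (k + 1) := by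
  induction hx using AddSubmonoid.closure_induction with
  | mem x hx =>
    obtain ⟨i, j, rfl, rfl⟩ := hx
    rw [mul_add, mul_assoc, ← pow_succ, h.pow_mul_pow_mul hk]
    exact add_mem (pow_mul_pow_mem_normalForms (by omega)) (pow_mul_pow_mem_normalForms (by omega))
  | zero => rw [zero_mul]; exact zero_mem _
  | add x y _ _ hx hy => rw [add_mul]; exact add_mem hx hy

theorem add_pow_mem_normalForms (h : WeakCommute S T) {k : ℕ} (hk : 3 ≤ k) :
    (T + S) ^ k ∈ normalForms S T k := by
  induction k, hk using Nat.le_induction with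
  | base => exact h.add_pow_three_mem_normalForms
  | succ k hk ih => rw [pow_succ]; exact h.mul_add_mem_normalForms hk ih

theorem exists_add_pow_eq (h : WeakCommute S T) {k m n : ℕ} (hk : 3 ≤ k)
    (hmn : m + n ≤ k + 1) : ∃ A B, (T + S) ^ k = S ^ m * A + B * T ^ n := by
  obtain ⟨_, ⟨A, rfl⟩, _, ⟨B, rfl⟩, hAB⟩ :=
    AddSubmonoid.mem_sup.mp (normalForms_le_mrange_sup hmn (h.add_pow_mem_normalForms hk))
  exact ⟨A, B, hAB.symm⟩

theorem neg_add (h : WeakCommute S T) : WeakCommute (-S) (T + S) := by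
  have hSS : Commute (S * S) S := (Commute.refl S).mul_left (Commute.refl S)
  have hST := h.commute_st_t.add_right h.commute_st_s
  have hTS := h.commute_ts_t.add_right h.commute_ts_s
  have hSST := h.commute_mul_self.add_right hSS
  refine ⟨?_, ?_, ?_, ?_⟩ <;>
    simp only [neg_mul, mul_neg, Commute.neg_left_iff, Commute.neg_right_iff]
  · rw [mul_add]; exact h.commute_st_s.add_left hSS
  · rw [mul_add]; exact hST.add_left hSST
  · rw [add_mul]; exact h.commute_ts_s.add_left hSS
  · rw [add_mul]; exact hTS.add_left hSST

end WeakCommute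

theorem rank_quotient_comap_ker_inf_le_of_mapsTo {R : Type*} {M N : Type u} [Ring R]
    [AddCommGroup M] [Module R M] [AddCommGroup N] [Module R N]
    {K : Submodule R M} {p : M →ₗ[R] N} {W : Submodule R N}
    (h : ∀ x ∈ K, p x ∈ W) :
    Module.rank R (K ⧸ (ker p ⊓ K).comap K.subtype) ≤ Module.rank R W := by
  have hker : ker (p.restrict h) = (ker p ⊓ K).comap K.subtype := by
    rw [ker_restrict, Submodule.comap_inf, Submodule.comap_subtype_self, inf_top_eq]
  rw [← hker, (quotKerEquivRange _).rank_eq]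
  exact Submodule.rank_le _

theorem range_neg_pow {R M : Type*} [Ring R] [TopologicalSpace M] [AddCommGroup M] [Module R M]
    [IsTopologicalAddGroup M] (S : M →L[R] M) (m : ℕ) :
    range (((-S) ^ m : M →L[R] M) : M →ₗ[R] M) =
      range ((S ^ m : M →L[R] M) : M →ₗ[R] M) := by
  rcases m.even_or_odd with hm | hm <;> simp [hm.neg_pow]

theorem WeakCommute.rank_quotient_ker_pow_le {R M : Type*} [Ring R] [TopologicalSpace M]
    [AddCommGroup M] [Module R M] [IsTopologicalAddGroup M] {S T : M →L[R] M}
    (h : WeakCommute S T) {k m n : ℕ} (hk : 3 ≤ k) (hmn : m + n ≤ k + 1) :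
    Module.rank R
      ((ker ((T ^ n : M →L[R] M) : M →ₗ[R] M) : Submodule R M) ⧸
        ((ker (((T + S) ^ k : M →L[R] M) : M →ₗ[R] M) ⊓
            ker ((T ^ n : M →L[R] M) : M →ₗ[R] M)).comap
          (ker ((T ^ n : M →L[R] M) : M →ₗ[R] M) : Submodule R M).subtype))
      ≤ Module.rank R (range ((S ^ m : M →L[R] M) : M →ₗ[R] M)) := by
  obtain ⟨A, B, hAB⟩ := h.exists_add_pow_eq hk hmn
  refine rank_quotient_comap_ker_inf_le_of_mapsTo fun x (hx : (T ^ n) x = 0) => ⟨A x, ?_⟩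
  change (S ^ m) (A x) = ((T + S) ^ k) x
  rw [hAB]
  change (S ^ m) (A x) = (S ^ m) (A x) + B ((T ^ n) x)
  rw [hx, map_zero, add_zero]

theorem kernel_quotient_rank_le_general {X : Type*} [NormedAddCommGroup X] [NormedSpace ℂ X]
    (S T : X →L[ℂ] X)
    (h1 : Commute (S * T) S) (h2 : Commute (S * T) T)
    (h3 : Commute (T * S) S) (h4 : Commute (T * S) T)
    (m n : ℕ) (hm : 1 ≤ m) (hn : 3 ≤ n) :
    Module.rank ℂ
      ((LinearMap.ker ((T ^ n : X →L[ℂ] X) : X →ₗ[ℂ] X) : Submodule ℂ X) ⧸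
        ((LinearMap.ker (((T + S) ^ (n + m - 1) : X →L[ℂ] X) : X →ₗ[ℂ] X) ⊓ LinearMap.ker ((T ^ n : X →L[ℂ] X) : X →ₗ[ℂ] X)).comap
          (LinearMap.ker ((T ^ n : X →L[ℂ] X) : X →ₗ[ℂ] X) : Submodule ℂ X).subtype))
      ≤ Module.rank ℂ (LinearMap.range ((S ^ m : X →L[ℂ] X) : X →ₗ[ℂ] X)) ∧
    Module.rank ℂ
      ((LinearMap.ker (((T + S) ^ n : X →L[ℂ] X) : X →ₗ[ℂ] X) : Submodule ℂ X) ⧸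
        ((LinearMap.ker ((T ^ (n + m - 1) : X →L[ℂ] X) : X →ₗ[ℂ] X) ⊓ LinearMap.ker (((T + S) ^ n : X →L[ℂ] X) : X →ₗ[ℂ] X)).comap
          (LinearMap.ker (((T + S) ^ n : X →L[ℂ] X) : X →ₗ[ℂ] X) : Submodule ℂ X).subtype))
      ≤ Module.rank ℂ (LinearMap.range ((S ^ m : X →L[ℂ] X) : X →ₗ[ℂ] X)) := by
  have h : WeakCommute S T := ⟨h1, h2, h3, h4⟩
  refine ⟨h.rank_quotient_ker_pow_le (by omega) (by omega), ?_⟩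
  have h' := h.neg_add.rank_quotient_ker_pow_le (k := n + m - 1) (m := m) (n := n)
    (by omega) (by omega)
  rwa [add_neg_cancel_right, range_neg_pow] at h'

theorem kernel_quotient_rank_le {X : Type*} [NormedAddCommGroup X] [NormedSpace ℂ X]
    [CompleteSpace X] (S T : X →L[ℂ] X)
    (h1 : Commute (S * T) S) (h2 : Commute (S * T) T)
    (h3 : Commute (T * S) S) (h4 : Commute (T * S) T)
    (m n : ℕ) (hm : 1 ≤ m) (hn : 3 ≤ n) :
    Module.rank ℂ
      ((LinearMap.ker ((T ^ n : X →L[ℂ] X) : X →ₗ[ℂ] X) : Submodule ℂ X) ⧸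
        ((LinearMap.ker (((T + S) ^ (n + m - 1) : X →L[ℂ] X) : X →ₗ[ℂ] X) ⊓ LinearMap.ker ((T ^ n : X →L[ℂ] X) : X →ₗ[ℂ] X)).comap
          (LinearMap.ker ((T ^ n : X →L[ℂ] X) : X →ₗ[ℂ] X) : Submodule ℂ X).subtype))
      ≤ Module.rank ℂ (LinearMap.range ((S ^ m : X →L[ℂ] X) : X →ₗ[ℂ] X)) ∧
    Module.rank ℂ
      ((LinearMap.ker (((T + S) ^ n : X →L[ℂ] X) : X →ₗ[ℂ] X) : Submodule ℂ X) ⧸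
        ((LinearMap.ker ((T ^ (n + m - 1) : X →L[ℂ] X) : X →ₗ[ℂ] X) ⊓ LinearMap.ker (((T + S) ^ n : X →L[ℂ] X) : X →ₗ[ℂ] X)).comap
          (LinearMap.ker (((T + S) ^ n : X →L[ℂ] X) : X →ₗ[ℂ] X) : Submodule ℂ X).subtype))
      ≤ Module.rank ℂ (LinearMap.range ((S ^ m : X →L[ℂ] X) : X →ₗ[ℂ] X)) :=
  kernel_quotient_rank_le_general S T h1 h2 h3 h4 m n hm hn
end

section
/- Let X be a Banach space, T ∈ L(X) with finite descent q(T) < ∞, and F ∈ L(X) a power finite rank operator (dim R(F^m) < ∞ for some m ≥ 1) with F ∈ comm_w(T). Then T + F has finite descent q(T+F) < ∞. -/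
/-!
Put `S = T + F` and `C = TF - FT`. The weak commutation hypotheses say exactly that `T` and `F`
annihilate `C` on both sides. Consequently `T²` and `S²` commute with `T` and `F`, and both
`S³ = T S² + F S²` and `T³ = S T² - F T²` are sums of two commuting operators. The commutative
binomial theorem then gives, with `W = R(F^m)` finite-dimensional and `q` the descent of `T`,
`R(S^(3(q+m))) ⊆ R(T^q) + W` and `R(T^q) = R(T^(3(n+m))) ⊆ R(S^n) + W` for every `n`. So
`R(S^n) + W` is eventually constant; as the chain `R(S^n) ∩ W` in the finite-dimensional `W`
stabilises as well, the modular law forces `R(S^n) = R(S^(n+1))` for some `n`.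
-/

section Ring

variable {A : Type*} [Ring A] {a b c : A}

theorem left_mul_lie_eq_zero (h : Commute (a * b) a) : a * ⁅a, b⁆ = 0 := by
  rw [Ring.lie_def, mul_sub, ← mul_assoc a b a, h.eq, sub_self]

theorem right_mul_lie_eq_zero (h : Commute (b * a) b) : b * ⁅a, b⁆ = 0 := by
  rw [Ring.lie_def, mul_sub, ← mul_assoc b a b, h.eq, sub_self]

theorem lie_mul_left_eq_zero (h : Commute (b * a) a) : ⁅a, b⁆ * a = 0 := by
  rw [Ring.lie_def, sub_mul, mul_assoc a b a, ← h.eq, sub_self]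

theorem lie_mul_right_eq_zero (h : Commute (a * b) b) : ⁅a, b⁆ * b = 0 := by
  rw [Ring.lie_def, sub_mul, mul_assoc b a b, ← h.eq, sub_self]

theorem commute_sq_of_mul_lie_eq_zero (hl : a * ⁅a, b⁆ = 0) (hr : ⁅a, b⁆ * a = 0) :
    Commute (a ^ 2) b := by
  have key : a ^ 2 * b - b * a ^ 2 = a * ⁅a, b⁆ + ⁅a, b⁆ * a := by
    rw [Ring.lie_def]; noncomm_ring
  rwa [hl, hr, add_zero, sub_eq_zero] at key

theorem commute_mul_mul_of_lie_mul_eq_zero (ha : Commute c a) (hb : Commute c b)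
    (h : ⁅a, b⁆ * c = 0) : Commute (a * c) (b * c) := by
  have key : a * c * (b * c) - b * c * (a * c) = ⁅a, b⁆ * c * c := by
    calc _ = a * (c * b) * c - b * (c * a) * c := by noncomm_ring
      _ = _ := by rw [hb.eq, ha.eq, Ring.lie_def]; noncomm_ring
  rwa [h, zero_mul, sub_eq_zero] at key

theorem commute_add_sq_left (hl : (a + b) * ⁅a, b⁆ = 0) (hr : ⁅a, b⁆ * (a + b) = 0) :
    Commute ((a + b) ^ 2) a := by
  have hlie : ⁅a + b, a⁆ = -⁅a, b⁆ := by simp only [Ring.lie_def]; noncomm_ring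
  exact commute_sq_of_mul_lie_eq_zero (by rw [hlie, mul_neg, hl, neg_zero])
    (by rw [hlie, neg_mul, hr, neg_zero])

theorem commute_add_sq_right (hl : (a + b) * ⁅a, b⁆ = 0) (hr : ⁅a, b⁆ * (a + b) = 0) :
    Commute ((a + b) ^ 2) b := by
  have hlie : ⁅a + b, b⁆ = ⁅a, b⁆ := by simp only [Ring.lie_def]; noncomm_ring
  exact commute_sq_of_mul_lie_eq_zero (by rwa [hlie]) (by rwa [hlie])

end Ring

namespace Module.End

section Semiring

variable {R M : Type*} [Semiring R] [AddCommMonoid M] [Module R M]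

def HasFiniteDescent (f : Module.End R M) : Prop :=
  ∃ n, (f ^ n).range = (f ^ (n + 1)).range

theorem range_mul_le (f g : Module.End R M) : (f * g).range ≤ f.range :=
  LinearMap.range_comp_le_range g f

theorem range_pow_antitone (f : Module.End R M) : Antitone fun n ↦ (f ^ n).range :=
  fun _ _ h ↦ f.iterateRange.monotone h

theorem range_pow_eq_of_range_pow_succ_eq {f : Module.End R M} {n : ℕ}
    (h : (f ^ n).range = (f ^ (n + 1)).range) {k : ℕ} (hk : n ≤ k) :
    (f ^ k).range = (f ^ n).range := by
  induction k, hk using Nat.le_induction with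
  | base => rfl
  | succ k _ ih =>
    rw [pow_succ', mul_eq_comp, LinearMap.range_comp, ih, ← LinearMap.range_comp, ← mul_eq_comp,
      ← pow_succ', ← h]

theorem range_add_pow_le_sup {f g : Module.End R M} (h : Commute f g) (n m : ℕ) :
    ((f + g) ^ (n + m)).range ≤ (f ^ n).range ⊔ (g ^ m).range := by
  rintro _ ⟨v, rfl⟩
  rw [h.add_pow, LinearMap.sum_apply]
  refine Submodule.sum_mem _ fun k _ ↦ ?_
  refine range_mul_le _ _ |>.trans ?_ ⟨v, rfl⟩
  rcases le_or_gt n k with hk | hk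
  · exact (range_mul_le _ _).trans (range_pow_antitone f hk) |>.trans le_sup_left
  · rw [(h.pow_pow k _).eq]
    exact (range_mul_le _ _).trans (range_pow_antitone g (by omega)) |>.trans le_sup_right

theorem range_mul_add_mul_pow_le_sup {f g h : Module.End R M} (hf : Commute h f) (hg : Commute h g)
    (hfg : Commute (f * h) (g * h)) (n m : ℕ) :
    ((f * h + g * h) ^ (n + m)).range ≤ (f ^ n).range ⊔ (g ^ m).range := by
  refine (range_add_pow_le_sup hfg n m).trans (sup_le_sup ?_ ?_)
  · rw [hf.symm.mul_pow]; exact range_mul_le _ _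
  · rw [hg.symm.mul_pow]; exact range_mul_le _ _

end Semiring

section Ring

variable {R M : Type*} [Ring R] [AddCommGroup M] [Module R M]

theorem range_add_pow_le_sup_range_pow {f g : Module.End R M} (hl : (f + g) * ⁅f, g⁆ = 0)
    (hr : ⁅f, g⁆ * (f + g) = 0) (n m : ℕ) :
    ((f + g) ^ (3 * (n + m))).range ≤ (f ^ n).range ⊔ (g ^ m).range := by
  have hf := commute_add_sq_left hl hr
  have hg := commute_add_sq_right hl hr
  have hfg : Commute (f * (f + g) ^ 2) (g * (f + g) ^ 2) :=
    commute_mul_mul_of_lie_mul_eq_zero hf hg (by rw [sq, ← mul_assoc, hr, zero_mul])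
  rw [pow_mul, pow_succ', add_mul]
  exact range_mul_add_mul_pow_le_sup hf hg hfg n m

theorem range_pow_le_sup_range_add_pow {f g : Module.End R M} (hl : f * ⁅f, g⁆ = 0)
    (hr : ⁅f, g⁆ * f = 0) (n m : ℕ) :
    (f ^ (3 * (n + m))).range ≤ ((f + g) ^ n).range ⊔ (g ^ m).range := by
  have hg := commute_sq_of_mul_lie_eq_zero hl hr
  have hs : Commute (f ^ 2) (f + g) := ((Commute.refl f).pow_left 2).add_right hg
  have hsg : Commute ((f + g) * f ^ 2) (-g * f ^ 2) := by
    refine commute_mul_mul_of_lie_mul_eq_zero hs hg.neg_right ?_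
    have hlie : ⁅f + g, -g⁆ = -⁅f, g⁆ := by simp only [Ring.lie_def]; noncomm_ring
    rw [hlie, neg_mul, sq, ← mul_assoc, hr, zero_mul, neg_zero]
  calc (f ^ (3 * (n + m))).range
      = (((f + g) * f ^ 2 + -g * f ^ 2) ^ (n + m)).range := by
        rw [← add_mul, add_neg_cancel_right, ← pow_succ', pow_mul]
    _ ≤ ((f + g) ^ n).range ⊔ ((-g) ^ m).range :=
        range_mul_add_mul_pow_le_sup hs hg.neg_right hsg n m
    _ ≤ ((f + g) ^ n).range ⊔ (g ^ m).range := by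
        rw [neg_pow']; exact sup_le_sup_left (range_mul_le _ _) _

end Ring

end Module.End

theorem Submodule.exists_eq_succ_of_sup_eq {K V : Type*} [DivisionRing K] [AddCommGroup V]
    [Module K V] {p : ℕ → Submodule K V} (hp : Antitone p) {W U : Submodule K V}
    [FiniteDimensional K W] {N : ℕ} (h : ∀ n, N ≤ n → p n ⊔ W = U) :
    ∃ n, p n = p (n + 1) := by
  let r i := Module.finrank K ↥(W ⊓ p (N + i))
  let k := Function.argmin r
  have hle : W ⊓ p (N + k + 1) ≤ W ⊓ p (N + k) := inf_le_inf_left W (hp (Nat.le_succ _))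
  have hWp : W ⊓ p (N + k + 1) = W ⊓ p (N + k) :=
    Submodule.eq_of_le_of_finrank_le hle (Function.argmin_le r (k + 1))
  refine ⟨N + k, le_antisymm ?_ (hp (Nat.le_succ _))⟩
  calc p (N + k) = (p (N + k + 1) ⊔ W) ⊓ p (N + k) := by
        rw [h _ (by omega), ← h (N + k) le_self_add, inf_eq_right.2 le_sup_left]
    _ = p (N + k + 1) ⊔ W ⊓ p (N + k + 1) := by
        rw [sup_inf_assoc_of_le W (hp (Nat.le_succ _)), hWp]
    _ ≤ p (N + k + 1) := sup_le le_rfl inf_le_right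

theorem Module.End.HasFiniteDescent.add {K V : Type*} [DivisionRing K] [AddCommGroup V] [Module K V]
    {t f : Module.End K V} (ht : t.HasFiniteDescent)
    (hf : ∃ m, FiniteDimensional K (f ^ m).range)
    (h1 : Commute (f * t) f) (h2 : Commute (f * t) t) (h3 : Commute (t * f) f)
    (h4 : Commute (t * f) t) : (t + f).HasFiniteDescent := by
  obtain ⟨q, hq⟩ := ht
  obtain ⟨m, hm⟩ := hf
  have htC : t * ⁅t, f⁆ = 0 := left_mul_lie_eq_zero h4
  have hfC : f * ⁅t, f⁆ = 0 := right_mul_lie_eq_zero h1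
  have hCt : ⁅t, f⁆ * t = 0 := lie_mul_left_eq_zero h2
  have hCf : ⁅t, f⁆ * f = 0 := lie_mul_right_eq_zero h3
  have hsC : (t + f) * ⁅t, f⁆ = 0 := by rw [add_mul, htC, hfC, add_zero]
  have hCs : ⁅t, f⁆ * (t + f) = 0 := by rw [mul_add, hCt, hCf, add_zero]
  refine Submodule.exists_eq_succ_of_sup_eq (range_pow_antitone (t + f)) (N := 3 * (q + m))
    (W := (f ^ m).range) (U := (t ^ q).range ⊔ (f ^ m).range) fun n hn ↦ le_antisymm ?_ ?_
  · exact sup_le ((range_pow_antitone _ hn).trans (range_add_pow_le_sup_range_pow hsC hCs q m))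
      le_sup_right
  · refine sup_le ?_ le_sup_right
    rw [← range_pow_eq_of_range_pow_succ_eq hq (k := 3 * (n + m)) (by omega)]
    exact range_pow_le_sup_range_add_pow htC hCt n m

theorem finite_descent_perturbation_general {X : Type*} [NormedAddCommGroup X] [NormedSpace ℂ X]
    (T F : X →L[ℂ] X)
    (hq : ∃ n : ℕ, LinearMap.range ((T ^ n : X →L[ℂ] X) : X →ₗ[ℂ] X) = LinearMap.range ((T ^ (n + 1) : X →L[ℂ] X) : X →ₗ[ℂ] X))
    (hF : ∃ m : ℕ, 1 ≤ m ∧ FiniteDimensional ℂ (LinearMap.range ((F ^ m : X →L[ℂ] X) : X →ₗ[ℂ] X)))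
    (h1 : Commute (F * T) F) (h2 : Commute (F * T) T)
    (h3 : Commute (T * F) F) (h4 : Commute (T * F) T) :
    ∃ n : ℕ, LinearMap.range (((T + F) ^ n : X →L[ℂ] X) : X →ₗ[ℂ] X) = LinearMap.range (((T + F) ^ (n + 1) : X →L[ℂ] X) : X →ₗ[ℂ] X) := by
  obtain ⟨m, -, hm⟩ := hF
  rw [ContinuousLinearMap.toLinearMap_pow] at hm
  simp only [ContinuousLinearMap.toLinearMap_pow, ContinuousLinearMap.toLinearMap_add] at hq ⊢
  exact Module.End.HasFiniteDescent.add hq ⟨m, hm⟩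
    (h1.map ContinuousLinearMap.toLinearMapRingHom) (h2.map ContinuousLinearMap.toLinearMapRingHom)
    (h3.map ContinuousLinearMap.toLinearMapRingHom) (h4.map ContinuousLinearMap.toLinearMapRingHom)

theorem finite_descent_perturbation {X : Type*} [NormedAddCommGroup X] [NormedSpace ℂ X]
    [CompleteSpace X] (T F : X →L[ℂ] X)
    (hq : ∃ n : ℕ, LinearMap.range ((T ^ n : X →L[ℂ] X) : X →ₗ[ℂ] X) = LinearMap.range ((T ^ (n + 1) : X →L[ℂ] X) : X →ₗ[ℂ] X))
    (hF : ∃ m : ℕ, 1 ≤ m ∧ FiniteDimensional ℂ (LinearMap.range ((F ^ m : X →L[ℂ] X) : X →ₗ[ℂ] X)))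
    (h1 : Commute (F * T) F) (h2 : Commute (F * T) T)
    (h3 : Commute (T * F) F) (h4 : Commute (T * F) T) :
    ∃ n : ℕ, LinearMap.range (((T + F) ^ n : X →L[ℂ] X) : X →ₗ[ℂ] X) = LinearMap.range (((T + F) ^ (n + 1) : X →L[ℂ] X) : X →ₗ[ℂ] X) :=
  finite_descent_perturbation_general T F hq hF h1 h2 h3 h4
end

section
/- Let X be a Banach space, T ∈ L(X) with finite ascent p(T) < ∞, and F ∈ L(X) a power finite rank operator with F ∈ comm_w(T). Then T + F has finite ascent p(T+F) < ∞. -/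
/-!
Let `M = range F^(m+3)`, where `range F^m` is finite-dimensional. The weak commutation relations
give `T^i F^j = F^j T^i` whenever `i + j ≥ 3`, so `M` is invariant under `T` and `F`, and every
power `(T + F)^n` with `n ≥ 3` is a sum of words `T^i F^j` with `i + j = n`. Expanding
`(T + F)^(n+k)` and `T^(n+k) = ((T + F) - F)^(n+k)` in this way shows that the chains of preimages
`T^{-n}(M)` and `(T + F)^{-n}(M)` are cofinal in each other. The first chain stabilises, because
`T` has finite ascent and `M` is finite-dimensional; hence so does the second, and since `M` is
finite-dimensional this forces the kernels of the powers of `T + F` to stabilise.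
-/

open LinearMap (ker range)

/-- `WeakCommute a b` is `b ∈ comm_w(a)` in the paper's notation; the relation is symmetric. -/
structure WeakCommute_s17 {R : Type*} [Semiring R] (a b : R) : Prop where
  ab_a : Commute (a * b) a
  ab_b : Commute (a * b) b
  ba_a : Commute (b * a) a
  ba_b : Commute (b * a) b

namespace WeakCommute_s17

section Semiring

variable {R : Type*} [Semiring R] {a b : R}

theorem symm (h : WeakCommute_s17 a b) : WeakCommute_s17 b a :=
  ⟨h.ba_b, h.ba_a, h.ab_b, h.ab_a⟩

theorem commute_pow_add_two_left (h : WeakCommute_s17 a b) (k : ℕ) : Commute (a ^ (k + 2)) b :=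
  calc a ^ (k + 2) * b = a ^ k * (a * (a * b)) := by simp only [pow_succ, mul_assoc]
    _ = a ^ k * (a * b * a) := by rw [h.ab_a.eq]
    _ = a ^ (k + 1) * (b * a) := by simp only [pow_succ, mul_assoc]
    _ = b * a * a ^ (k + 1) := (h.ba_a.pow_right (k + 1)).eq.symm
    _ = b * a ^ (k + 2) := by rw [mul_assoc, ← pow_succ']

theorem commute_pow_pow (h : WeakCommute_s17 a b) {i j : ℕ} (hij : 3 ≤ i + j) :
    Commute (a ^ i) (b ^ j) := by
  rcases le_or_gt 2 i with hi | hi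
  · obtain ⟨k, rfl⟩ := Nat.exists_eq_add_of_le' hi
    exact (h.commute_pow_add_two_left k).pow_right j
  · obtain ⟨k, rfl⟩ : ∃ k, j = k + 2 := ⟨j - 2, by omega⟩
    exact ((h.symm.commute_pow_add_two_left k).pow_right i).symm

theorem add_left (h : WeakCommute_s17 a b) : WeakCommute_s17 (a + b) b := by
  have hbb_a : Commute (b * b) a := by
    simpa [sq] using (h.commute_pow_pow (i := 1) (j := 2) le_rfl).symm
  have hbb_b : Commute (b * b) b := (Commute.refl b).mul_left (Commute.refl b)
  refine ⟨?_, ?_, ?_, ?_⟩ <;> simp only [add_mul, mul_add]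
  · exact (h.ab_a.add_right h.ab_b).add_left (hbb_a.add_right hbb_b)
  · exact h.ab_b.add_left hbb_b
  · exact (h.ba_a.add_right h.ba_b).add_left (hbb_a.add_right hbb_b)
  · exact h.ba_b.add_left hbb_b

theorem add_pow_mem_closure (h : WeakCommute_s17 a b) {n : ℕ} (hn : 3 ≤ n) :
    (a + b) ^ n ∈ AddSubmonoid.closure {x | ∃ i j, i + j = n ∧ a ^ i * b ^ j = x} := by
  induction n, hn using Nat.le_induction with
  | base =>
    have word : ∀ i j, i + j = 3 → a ^ i * b ^ j ∈
        AddSubmonoid.closure {x | ∃ i j, i + j = 3 ∧ a ^ i * b ^ j = x} :=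
      fun i j hij => AddSubmonoid.subset_closure ⟨i, j, hij, rfl⟩
    have expand : (a + b) ^ 3 = a ^ 3 * b ^ 0 + (a ^ 2 * b ^ 1 + a * b * a + b * a ^ 2)
        + (a ^ 1 * b ^ 2 + b * a * b + b ^ 2 * a) + a ^ 0 * b ^ 3 := by noncomm_ring
    have aba : a * b * a = a ^ 2 * b ^ 1 := by rw [h.ab_a.eq]; noncomm_ring
    have baa : b * a ^ 2 = a ^ 2 * b ^ 1 := by
      simpa using (h.commute_pow_pow (i := 2) (j := 1) le_rfl).eq.symm
    have bab : b * a * b = a ^ 1 * b ^ 2 := by rw [mul_assoc, ← h.ab_b.eq]; noncomm_ring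
    have bba : b ^ 2 * a = a ^ 1 * b ^ 2 := by
      simpa using (h.commute_pow_pow (i := 1) (j := 2) le_rfl).eq.symm
    rw [expand, aba, baa, bab, bba]
    exact add_mem (add_mem (add_mem (word 3 0 rfl)
      (add_mem (add_mem (word 2 1 rfl) (word 2 1 rfl)) (word 2 1 rfl)))
      (add_mem (add_mem (word 1 2 rfl) (word 1 2 rfl)) (word 1 2 rfl))) (word 0 3 rfl)
  | succ n hn ih =>
    rw [pow_succ]
    refine (AddSubmonoid.closure_le (S := (AddSubmonoid.closure _).comap
      (AddMonoidHom.mulRight (a + b))).2 ?_ ih)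
    rintro _ ⟨i, j, hij, rfl⟩
    have hab : a ^ i * b ^ j * a = a ^ (i + 1) * b ^ j := by
      rw [(h.commute_pow_pow (by omega)).eq, mul_assoc, ← pow_succ,
        (h.commute_pow_pow (by omega)).eq]
    simp only [SetLike.mem_coe, AddSubmonoid.mem_comap, AddMonoidHom.coe_mulRight]
    rw [mul_add, hab, mul_assoc, ← pow_succ]
    exact add_mem (AddSubmonoid.subset_closure ⟨i + 1, j, by omega, rfl⟩)
      (AddSubmonoid.subset_closure ⟨i, j + 1, by omega, rfl⟩)

end Semiring

theorem neg_right {R : Type*} [Ring R] {a b : R} (h : WeakCommute_s17 a b) : WeakCommute_s17 a (-b) :=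
  ⟨by simpa using h.ab_a.neg_left, by simpa using h.ab_b.neg_left.neg_right,
    by simpa using h.ba_a.neg_left, by simpa using h.ba_b.neg_left.neg_right⟩

end WeakCommute_s17

namespace Module.End

section Semiring

variable {R V : Type*} [Semiring R] [AddCommMonoid V] [Module R V] {f g : End R V}
  {M : Submodule R V}

theorem pow_apply_mem (hM : ∀ x ∈ M, f x ∈ M) (n : ℕ) : ∀ x ∈ M, (f ^ n) x ∈ M := by
  rw [coe_pow]
  exact Set.MapsTo.iterate hM n

theorem apply_mem_range_of_commute (h : Commute f g) : ∀ x ∈ range g, f x ∈ range g := by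
  rintro _ ⟨x, rfl⟩
  exact ⟨f x, by rw [← mul_apply, ← h.eq, mul_apply]⟩

theorem comap_pow_le_comap_pow_succ (hM : ∀ x ∈ M, f x ∈ M) (n : ℕ) :
    M.comap (f ^ n) ≤ M.comap (f ^ (n + 1)) := fun x hx => by
  rw [Submodule.mem_comap, pow_succ', mul_apply]
  exact hM _ hx

theorem comap_pow_constant {p : ℕ} (h : M.comap (f ^ p) = M.comap (f ^ (p + 1))) (k : ℕ) :
    M.comap (f ^ p) = M.comap (f ^ (p + k)) := by
  induction k with
  | zero => rfl
  | succ k ih =>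
    rw [← add_assoc, pow_succ, mul_eq_comp, Submodule.comap_comp, ← ih, ← Submodule.comap_comp,
      ← mul_eq_comp, ← pow_succ, h]

end Semiring

section DivisionRing

variable {K V : Type*} [DivisionRing K] [AddCommGroup V] [Module K V] {f : End K V}
  {M : Submodule K V} [FiniteDimensional K M]

theorem comap_pow_eq_comap_pow_succ_of_ker_pow_eq (hM : ∀ x ∈ M, f x ∈ M) {p : ℕ}
    (hp : ker (f ^ p) = ker (f ^ (p + 1))) : M.comap (f ^ p) = M.comap (f ^ (p + 1)) := by
  set R := M ⊓ range (f ^ p)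
  have hR : ∀ y ∈ R, f y ∈ R := fun y hy =>
    ⟨hM y hy.1, apply_mem_range_of_commute (Commute.self_pow f p) y hy.2⟩
  have : FiniteDimensional K R := Submodule.finiteDimensional_of_le inf_le_left
  -- `f` is injective on `R ⊆ range (f ^ p)` because `ker f ⊓ range (f ^ p) = 0`, by `hp`.
  have hinj : Function.Injective (f.restrict hR) := by
    rw [← LinearMap.ker_eq_bot, LinearMap.ker_eq_bot']
    intro y hy
    obtain ⟨z, hz⟩ := y.2.2
    have hz' : z ∈ ker (f ^ (p + 1)) := by
      rw [LinearMap.mem_ker, pow_succ', mul_apply, hz]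
      exact congrArg Subtype.val hy
    rw [← hp, LinearMap.mem_ker, hz] at hz'
    exact Subtype.ext hz'
  refine le_antisymm (comap_pow_le_comap_pow_succ hM p) fun x hx => ?_
  have hxR : (f ^ (p + 1)) x ∈ R := ⟨hx, f x, by rw [pow_succ, mul_apply]⟩
  obtain ⟨⟨_, hyM, z, rfl⟩, hy⟩ := LinearMap.injective_iff_surjective.mp hinj ⟨_, hxR⟩
  have hzx : f ((f ^ p) z) = (f ^ (p + 1)) x := congrArg Subtype.val hy
  have hxz : x - z ∈ ker (f ^ (p + 1)) := by
    rw [LinearMap.mem_ker, map_sub, sub_eq_zero, ← hzx, pow_succ', mul_apply]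
  rw [← hp, LinearMap.mem_ker, map_sub, sub_eq_zero] at hxz
  rw [Submodule.mem_comap, hxz]
  exact hyM

theorem exists_ker_pow_eq_ker_pow_succ_of_comap_pow_eq (hM : ∀ x ∈ M, f x ∈ M) {N : ℕ}
    (hN : M.comap (f ^ N) = M.comap (f ^ (N + 1))) : ∃ n, ker (f ^ n) = ker (f ^ (n + 1)) := by
  -- `f ^ N` maps `ker (f ^ n)`, `n ≥ N`, into `M`, where the kernels of powers of `f` stabilise.
  obtain ⟨q, -, hq⟩ := exists_ker_pow_eq_ker_pow_succ (f.restrict hM)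
  refine ⟨N + q, le_antisymm ?_ fun x hx => ?_⟩
  · rw [pow_succ', mul_eq_comp]
    exact LinearMap.ker_le_ker_comp _ _
  have hxM : x ∈ M.comap (f ^ N) := by
    rw [comap_pow_constant hN (q + 1), Submodule.mem_comap, ← add_assoc, LinearMap.mem_ker.1 hx]
    exact M.zero_mem
  have hker : ∀ n, (f.restrict hM ^ n) ⟨(f ^ N) x, hxM⟩ = 0 ↔ (f ^ (N + n)) x = 0 := fun n => by
    rw [pow_restrict, ← Submodule.coe_eq_zero, LinearMap.coe_restrict_apply, ← mul_apply,
      ← pow_add, add_comm]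
  have hy : (⟨(f ^ N) x, hxM⟩ : M) ∈ ker (f.restrict hM ^ (q + 1)) := (hker (q + 1)).2 hx
  rw [← hq, LinearMap.mem_ker, hker] at hy
  exact hy

end DivisionRing

end Module.End

namespace WeakCommute_s17

open Module.End

theorem comap_pow_le_comap_add_pow {R V : Type*} [Semiring R] [AddCommMonoid V] [Module R V]
    {a b : Module.End R V} (h : WeakCommute_s17 a b) {M : Submodule R V} (ha : ∀ x ∈ M, a x ∈ M)
    (hb : ∀ x ∈ M, b x ∈ M) {m : ℕ} (hbm : range (b ^ m) ≤ M) {n : ℕ} (hnm : 3 ≤ n + m) :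
    M.comap (a ^ n) ≤ M.comap ((a + b) ^ (n + m)) := by
  intro x hx
  have hword : ∀ i j, i + j = n + m → (a ^ i * b ^ j) x ∈ M := by
    intro i j hij
    rcases le_or_gt m j with hj | hj
    · obtain ⟨k, rfl⟩ := Nat.exists_eq_add_of_le hj
      rw [mul_apply, pow_add, mul_apply]
      exact pow_apply_mem ha i _ (hbm ⟨_, rfl⟩)
    · obtain ⟨k, rfl⟩ : ∃ k, i = k + n := ⟨i - n, by omega⟩
      rw [(h.commute_pow_pow (hij ▸ hnm)).eq, mul_apply, pow_add, mul_apply]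
      exact pow_apply_mem hb j _ (pow_apply_mem ha k _ hx)
  refine AddSubmonoid.closure_induction (motive := fun g _ => g x ∈ M) ?_ M.zero_mem
    (fun _ _ _ _ => M.add_mem) (h.add_pow_mem_closure hnm)
  rintro _ ⟨i, j, hij, rfl⟩
  exact hword i j hij

theorem exists_ker_add_pow_eq_ker_add_pow_succ {K V : Type*} [DivisionRing K] [AddCommGroup V]
    [Module K V] {f g : Module.End K V} (h : WeakCommute_s17 f g) {p : ℕ}
    (hp : ker (f ^ p) = ker (f ^ (p + 1))) {m : ℕ} [FiniteDimensional K (range (g ^ m))] :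
    ∃ n, ker ((f + g) ^ n) = ker ((f + g) ^ (n + 1)) := by
  have hMle : range (g ^ (m + 3)) ≤ range (g ^ m) := by
    rw [pow_add, mul_eq_comp]
    exact LinearMap.range_comp_le_range _ _
  set M := range (g ^ (m + 3))
  have : FiniteDimensional K M := Submodule.finiteDimensional_of_le hMle
  have hMf : ∀ x ∈ M, f x ∈ M := apply_mem_range_of_commute <| by
    simpa using h.commute_pow_pow (i := 1) (j := m + 3) (by omega)
  have hMg : ∀ x ∈ M, g x ∈ M := apply_mem_range_of_commute (Commute.self_pow g (m + 3))
  have hMS : ∀ x ∈ M, (f + g) x ∈ M := fun x hx => M.add_mem (hMf x hx) (hMg x hx)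
  have hMneg : ∀ x ∈ M, (-g) x ∈ M := fun x hx => M.neg_mem (hMg x hx)
  have hneg_range : range ((-g) ^ (m + 3)) ≤ M := by
    rw [neg_pow', mul_eq_comp]
    exact LinearMap.range_comp_le_range _ _
  have hf_stable := comap_pow_constant (comap_pow_eq_comap_pow_succ_of_ker_pow_eq hMf hp)
  have hfS : ∀ n, M.comap (f ^ n) ≤ M.comap ((f + g) ^ (n + (m + 3))) := fun n =>
    h.comap_pow_le_comap_add_pow hMf hMg le_rfl (by omega)
  have hSf : ∀ n, M.comap ((f + g) ^ n) ≤ M.comap (f ^ (n + (m + 3))) := fun n => by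
    simpa using h.add_left.neg_right.comap_pow_le_comap_add_pow hMS hMneg hneg_range
      (n := n) (by omega)
  refine exists_ker_pow_eq_ker_pow_succ_of_comap_pow_eq hMS (N := p + (m + 3))
    (le_antisymm (comap_pow_le_comap_pow_succ hMS _) ?_)
  calc M.comap ((f + g) ^ (p + (m + 3) + 1))
        ≤ M.comap (f ^ (p + (m + 3 + 1 + (m + 3)))) := by
        simpa only [add_assoc] using hSf (p + (m + 3) + 1)
    _ = M.comap (f ^ p) := (hf_stable _).symm
    _ ≤ M.comap ((f + g) ^ (p + (m + 3))) := hfS p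

end WeakCommute_s17

theorem finite_ascent_perturbation_general {X : Type*} [NormedAddCommGroup X] [NormedSpace ℂ X]
    (T F : X →L[ℂ] X)
    (hp : ∃ n : ℕ, LinearMap.ker ((T ^ n : X →L[ℂ] X) : X →ₗ[ℂ] X) =
      LinearMap.ker ((T ^ (n + 1) : X →L[ℂ] X) : X →ₗ[ℂ] X))
    (hF : ∃ m : ℕ, 1 ≤ m ∧ FiniteDimensional ℂ (LinearMap.range ((F ^ m : X →L[ℂ] X) : X →ₗ[ℂ] X)))
    (h1 : Commute (F * T) F) (h2 : Commute (F * T) T)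
    (h3 : Commute (T * F) F) (h4 : Commute (T * F) T) :
    ∃ n : ℕ, LinearMap.ker (((T + F) ^ n : X →L[ℂ] X) : X →ₗ[ℂ] X) =
      LinearMap.ker (((T + F) ^ (n + 1) : X →L[ℂ] X) : X →ₗ[ℂ] X) := by
  obtain ⟨p, hp⟩ := hp
  obtain ⟨m, -, hm⟩ := hF
  let φ := ContinuousLinearMap.toLinearMapRingHom (R₁ := ℂ) (M₁ := X)
  have hw : WeakCommute_s17 (T : X →ₗ[ℂ] X) F := ⟨h4.map φ, h3.map φ, h2.map φ, h1.map φ⟩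
  rw [ContinuousLinearMap.toLinearMap_pow] at hm
  simp only [ContinuousLinearMap.toLinearMap_pow, ContinuousLinearMap.toLinearMap_add] at hp ⊢
  exact hw.exists_ker_add_pow_eq_ker_add_pow_succ hp (m := m)

theorem finite_ascent_perturbation {X : Type*} [NormedAddCommGroup X] [NormedSpace ℂ X]
    [CompleteSpace X] (T F : X →L[ℂ] X)
    (hp : ∃ n : ℕ, LinearMap.ker ((T ^ n : X →L[ℂ] X) : X →ₗ[ℂ] X) =
      LinearMap.ker ((T ^ (n + 1) : X →L[ℂ] X) : X →ₗ[ℂ] X))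
    (hF : ∃ m : ℕ, 1 ≤ m ∧ FiniteDimensional ℂ (LinearMap.range ((F ^ m : X →L[ℂ] X) : X →ₗ[ℂ] X)))
    (h1 : Commute (F * T) F) (h2 : Commute (F * T) T)
    (h3 : Commute (T * F) F) (h4 : Commute (T * F) T) :
    ∃ n : ℕ, LinearMap.ker (((T + F) ^ n : X →L[ℂ] X) : X →ₗ[ℂ] X) =
      LinearMap.ker (((T + F) ^ (n + 1) : X →L[ℂ] X) : X →ₗ[ℂ] X) :=
  finite_ascent_perturbation_general T F hp hF h1 h2 h3 h4
end

section
/- Let X be an infinite-dimensional complex Banach space, T ∈ L(X) algebraic (P(T) = 0 for some nonzero polynomial P), and N ∈ L(X) nilpotent such that N ∈ comm_l(T) and T commutes with TN. Then T + N is algebraic. -/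
theorem algebraic_nilpotent_perturbation {X : Type*} [NormedAddCommGroup X]
    [NormedSpace ℂ X] [CompleteSpace X] (hX : ¬ FiniteDimensional ℂ X)
    (T N : X →L[ℂ] X)
    (hT : ∃ P : Polynomial ℂ, P ≠ 0 ∧ Polynomial.aeval T P = 0)
    (hN : ∃ k : ℕ, N ^ k = 0)
    (h1 : Commute (N * T) N) (h2 : Commute (T * N) T)
    (h3 : Commute T (T * N)) :
    ∃ P : Polynomial ℂ, P ≠ 0 ∧ Polynomial.aeval (T + N) P = 0 := by
  classical
  obtain ⟨P, hP0, hPT⟩ := hT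
  obtain ⟨k, hk⟩ := hN
  by_cases hsub : Subsingleton (X →L[ℂ] X)
  · exact ⟨Polynomial.X, Polynomial.X_ne_zero, Subsingleton.elim _ _⟩
  have hnt : Nontrivial (X →L[ℂ] X) := not_subsingleton_iff_nontrivial.mp hsub
  -- monic annihilating polynomial
  set Q : Polynomial ℂ := P * Polynomial.C P.leadingCoeff⁻¹ with hQdef
  have hQm : Q.Monic := Polynomial.monic_mul_leadingCoeff_inv hP0
  have hQT : Polynomial.aeval T Q = 0 := by
    simp [hQdef, hPT]
  set d : ℕ := Q.natDegree with hd
  have hd1 : 1 ≤ d := by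
    by_contra h
    have hd0 : d = 0 := by omega
    have hQ1 : Q = 1 := Polynomial.eq_one_of_monic_natDegree_zero hQm hd0
    rw [hQ1] at hQT
    simp at hQT
  have hk1 : 1 ≤ k := by
    rcases Nat.eq_zero_or_pos k with h | h
    · exfalso; rw [h, pow_zero] at hk; exact one_ne_zero hk
    · exact h
  -- key word-rewriting lemmas
  have hA : ∀ c : ℕ, N * (T * N ^ c) = N ^ (c + 1) * T := by
    intro c
    induction c with
    | zero => simp
    | succ c ih =>
      calc N * (T * N ^ (c + 1)) = N * T * N * N ^ c := by
            simp only [pow_succ', mul_assoc]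
        _ = N * (N * T) * N ^ c := by rw [h1.eq]
        _ = N * (N * (T * N ^ c)) := by simp only [mul_assoc]
        _ = N * (N ^ (c + 1) * T) := by rw [ih]
        _ = N * N ^ (c + 1) * T := by rw [mul_assoc]
        _ = N ^ (c + 1 + 1) * T := by rw [← pow_succ']
  have hB : ∀ c : ℕ, T * N ^ (c + 1) * T = T * (T * N ^ (c + 1)) := by
    intro c
    calc T * N ^ (c + 1) * T = T * (N ^ (c + 1) * T) := by rw [mul_assoc]
      _ = T * (N * (T * N ^ c)) := by rw [← hA c]
      _ = T * N * T * N ^ c := by simp only [mul_assoc]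
      _ = T * (T * N) * N ^ c := by rw [h2.eq]
      _ = T * (T * N ^ (c + 1)) := by simp only [pow_succ', mul_assoc]
  have hC : ∀ a c : ℕ, T * N ^ (c + 1) * T ^ (a + 1) = T * (T ^ (a + 1) * N ^ (c + 1)) := by
    intro a c
    induction a with
    | zero => simpa [pow_one] using hB c
    | succ a ih =>
      calc T * N ^ (c + 1) * T ^ (a + 1 + 1)
          = T * N ^ (c + 1) * T * T ^ (a + 1) := by simp only [pow_succ', mul_assoc]
        _ = T * (T * N ^ (c + 1)) * T ^ (a + 1) := by rw [hB c]
        _ = T * (T * N ^ (c + 1) * T ^ (a + 1)) := by simp only [mul_assoc]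
        _ = T * (T * (T ^ (a + 1) * N ^ (c + 1))) := by rw [ih]
        _ = T * (T ^ (a + 1 + 1) * N ^ (c + 1)) := by simp only [pow_succ', mul_assoc]
  -- T^d as combination of lower powers
  have hTd : T ^ d = -∑ i ∈ Finset.range d, Q.coeff i • T ^ i := by
    have h0 := Polynomial.aeval_eq_sum_range (p := Q) T
    rw [hQT, ← hd, Finset.sum_range_succ, hQm.coeff_natDegree, one_smul] at h0
    exact eq_neg_of_add_eq_zero_right h0.symm
  -- the finite-dimensional space of reduced words
  set W : Submodule ℂ (X →L[ℂ] X) :=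
    Submodule.span ℂ ((fun p : ℕ × ℕ × ℕ => N ^ p.1 * T ^ p.2.1 * N ^ p.2.2) ''
      ((Finset.range k ×ˢ Finset.range d ×ˢ Finset.range k : Finset (ℕ × ℕ × ℕ)) :
        Set (ℕ × ℕ × ℕ))) with hW
  have hmem : ∀ a b c : ℕ, N ^ b * T ^ a * N ^ c ∈ W := by
    intro a
    induction a using Nat.strong_induction_on with
    | _ a ih =>
      intro b c
      by_cases hb : k ≤ b
      · have hNb : N ^ b = 0 := by
          rw [← Nat.sub_add_cancel hb, pow_add, hk, mul_zero]
        simp [hNb]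
      by_cases hc : k ≤ c
      · have hNc : N ^ c = 0 := by
          rw [← Nat.sub_add_cancel hc, pow_add, hk, mul_zero]
        simp [hNc]
      by_cases ha : a < d
      · apply Submodule.subset_span
        refine ⟨(b, a, c), ?_, rfl⟩
        simp only [Finset.coe_product, Set.mem_prod, Finset.mem_coe, Finset.mem_range]
        exact ⟨by omega, by omega, by omega⟩
      · push_neg at ha
        have key : N ^ b * T ^ a * N ^ c
            = -∑ i ∈ Finset.range d, Q.coeff i • (N ^ b * T ^ (a - d + i) * N ^ c) := by
          have h1' : N ^ b * T ^ a * N ^ c = N ^ b * (T ^ (a - d) * T ^ d) * N ^ c := by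
            rw [← pow_add, Nat.sub_add_cancel ha]
          rw [h1', hTd, mul_neg, mul_neg, neg_mul, Finset.mul_sum, Finset.mul_sum,
            Finset.sum_mul]
          congr 1
          apply Finset.sum_congr rfl
          intro i _
          rw [mul_smul_comm, mul_smul_comm, smul_mul_assoc, ← pow_add]
        rw [key]
        apply neg_mem
        apply Submodule.sum_mem
        intro i hi
        apply Submodule.smul_mem
        have hlt : a - d + i < a := by
          simp only [Finset.mem_range] at hi
          omega
        exact ih _ hlt b c
  have h1W : (1 : X →L[ℂ] X) ∈ W := by
    simpa using hmem 0 0 0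
  -- closure under left multiplication
  have hNW : ∀ x ∈ W, N * x ∈ W := by
    intro x hx
    induction hx using Submodule.span_induction with
    | mem x hx =>
      obtain ⟨⟨b, a, c⟩, _, rfl⟩ := hx
      have e : N * (N ^ b * T ^ a * N ^ c) = N ^ (b + 1) * T ^ a * N ^ c := by
        rw [pow_succ']
        simp only [mul_assoc]
      rw [e]
      exact hmem a (b + 1) c
    | zero => simp
    | add x y _ _ hx hy => rw [mul_add]; exact add_mem hx hy
    | smul r x _ hx => rw [mul_smul_comm]; exact Submodule.smul_mem _ _ hx
  have hTW : ∀ x ∈ W, T * x ∈ W := by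
    intro x hx
    induction hx using Submodule.span_induction with
    | mem x hx =>
      obtain ⟨⟨b, a, c⟩, _, rfl⟩ := hx
      match b, a with
      | 0, a =>
        have e : T * (N ^ 0 * T ^ a * N ^ c) = N ^ 0 * T ^ (a + 1) * N ^ c := by
          simp only [pow_zero, one_mul]
          rw [pow_succ']
          simp only [mul_assoc]
        rw [e]
        exact hmem (a + 1) 0 c
      | b + 1, 0 =>
        have e : T * (N ^ (b + 1) * T ^ 0 * N ^ c) = N ^ 0 * T ^ 1 * N ^ (b + 1 + c) := by
          simp only [pow_zero, one_mul, mul_one, pow_one]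
          rw [← pow_add]
        rw [e]
        exact hmem 1 0 (b + 1 + c)
      | b + 1, a + 1 =>
        have e : T * (N ^ (b + 1) * T ^ (a + 1) * N ^ c)
            = N ^ 0 * T ^ (a + 1 + 1) * N ^ (b + 1 + c) := by
          calc T * (N ^ (b + 1) * T ^ (a + 1) * N ^ c)
              = T * N ^ (b + 1) * T ^ (a + 1) * N ^ c := by simp only [mul_assoc]
            _ = T * (T ^ (a + 1) * N ^ (b + 1)) * N ^ c := by rw [hC a b]
            _ = T * T ^ (a + 1) * (N ^ (b + 1) * N ^ c) := by simp only [mul_assoc]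
            _ = N ^ 0 * T ^ (a + 1 + 1) * N ^ (b + 1 + c) := by
                rw [← pow_succ', ← pow_add, pow_zero, one_mul]
        rw [e]
        exact hmem (a + 1 + 1) 0 (b + 1 + c)
    | zero => simp
    | add x y _ _ hx hy => rw [mul_add]; exact add_mem hx hy
    | smul r x _ hx => rw [mul_smul_comm]; exact Submodule.smul_mem _ _ hx
  -- powers of T + N are in W
  have hpow : ∀ m : ℕ, (T + N) ^ m ∈ W := by
    intro m
    induction m with
    | zero => simpa using h1W
    | succ m ih =>
      rw [pow_succ', add_mul]
      exact add_mem (hTW _ ih) (hNW _ ih)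
  have haev : ∀ p : Polynomial ℂ, Polynomial.aeval (T + N) p ∈ W := by
    intro p
    induction p using Polynomial.induction_on' with
    | add p q hp hq => rw [map_add]; exact add_mem hp hq
    | monomial n a =>
      rw [Polynomial.aeval_monomial, ← Algebra.smul_def]
      exact Submodule.smul_mem _ _ (hpow n)
  -- the adjoin algebra is contained in W
  have hadj : (Subalgebra.toSubmodule (Algebra.adjoin ℂ {T + N})) ≤ W := by
    intro x hx
    rw [Subalgebra.mem_toSubmodule, Algebra.adjoin_singleton_eq_range_aeval] at hx
    obtain ⟨p, rfl⟩ := hx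
    exact haev p
  -- finite generation
  have hWfg : W.FG := Submodule.fg_span ((Finset.range k ×ˢ Finset.range d ×ˢ
      Finset.range k).finite_toSet.image _)
  haveI : FiniteDimensional ℂ W := (Submodule.fg_iff_finiteDimensional _).mp hWfg
  haveI hfd : FiniteDimensional ℂ (Subalgebra.toSubmodule (Algebra.adjoin ℂ {T + N})) :=
    Submodule.finiteDimensional_of_le hadj
  have hfg : (Subalgebra.toSubmodule (Algebra.adjoin ℂ {T + N})).FG :=
    (Submodule.fg_iff_finiteDimensional _).mpr hfd
  have hint : IsIntegral ℂ (T + N) :=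
    IsIntegral.of_mem_of_fg _ hfg _ (Algebra.self_mem_adjoin_singleton ℂ _)
  obtain ⟨p, hpm, hpe⟩ := hint
  exact ⟨p, hpm.ne_zero, hpe⟩
end
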